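/- arXiv:1910.14402 — 10 statements merged into one kernel-verified Lean document; each statement's English description precedes it below -/
import Mathlib

section
/- Let n ≥ 3 and let G be the complete graph on n vertices with exactly one edge removed. Then the largest eigenvalue of the normalized graph Laplacian of G is exactly (n+1)/(n-1). -/
open Finset

/-- The normalized graph Laplacian `Lf(x) = f(x) - (1/d(x)) ∑_{y ~ x} f(y)`. -/
noncomputable def normLap {V : Type*} [Fintype V] [DecidableEq V] (G : SimpleGraph V)
    [DecidableRel G.Adj] (f : V → ℝ) : V → ℝ :=
  fun x => f x - (∑ y ∈ G.neighborFinset x, f y) / (G.degree x : ℝ)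

/-- `μ` is an eigenvalue of the normalized Laplacian of `G`. -/
def IsNormLapEigenvalue {V : Type*} [Fintype V] [DecidableEq V] (G : SimpleGraph V)
    [DecidableRel G.Adj] (μ : ℝ) : Prop :=
  ∃ f : V → ℝ, f ≠ 0 ∧ normLap G f = μ • f

/-- `μ` is the largest eigenvalue of the normalized Laplacian of `G`. -/
def IsMaxNormLapEigenvalue {V : Type*} [Fintype V] [DecidableEq V] (G : SimpleGraph V)
    [DecidableRel G.Adj] (μ : ℝ) : Prop :=
  IsNormLapEigenvalue G μ ∧ ∀ ν, IsNormLapEigenvalue G ν → ν ≤ μ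

section Aux
variable {V : Type*} [Fintype V] [DecidableEq V]
    (G : SimpleGraph V) [DecidableRel G.Adj] (n : ℕ) (hn : n = Fintype.card V)
    (hn3 : 3 ≤ n) (v w : V) (hvw : v ≠ w)
    (hadj : ∀ a b : V, G.Adj a b ↔ (a ≠ b ∧ ¬((a = v ∧ b = w) ∨ (a = w ∧ b = v))))

include hn hn3 hvw hadj

theorem nbr_v : G.neighborFinset v = univ \ {v, w} := by
  ext y
  simp only [SimpleGraph.mem_neighborFinset, hadj, mem_sdiff, mem_univ, mem_insert,
    mem_singleton, true_and]
  aesop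

theorem nbr_w : G.neighborFinset w = univ \ {v, w} := by
  ext y
  simp only [SimpleGraph.mem_neighborFinset, hadj, mem_sdiff, mem_univ, mem_insert,
    mem_singleton, true_and]
  aesop

theorem nbr_o (x : V) (hxv : x ≠ v) (hxw : x ≠ w) :
    G.neighborFinset x = univ \ {x} := by
  ext y
  simp only [SimpleGraph.mem_neighborFinset, hadj, mem_sdiff, mem_univ, mem_singleton, true_and]
  constructor
  · rintro ⟨h1, -⟩; exact fun h => h1 h.symm
  · intro h
    refine ⟨fun h' => h h'.symm, ?_⟩
    rintro (⟨h', -⟩ | ⟨h', -⟩)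
    · exact hxv h'
    · exact hxw h'

theorem deg_v : (G.degree v : ℝ) = (n : ℝ) - 2 := by
  rw [SimpleGraph.degree, nbr_v G n hn hn3 v w hvw hadj]
  rw [Finset.card_sdiff_of_subset (by simp)]
  rw [Finset.card_insert_of_notMem (by simpa using hvw), Finset.card_singleton,
    Finset.card_univ, ← hn]
  push_cast [Nat.cast_sub (by omega : 2 ≤ n)]
  ring

theorem deg_w : (G.degree w : ℝ) = (n : ℝ) - 2 := by
  rw [SimpleGraph.degree, nbr_w G n hn hn3 v w hvw hadj]
  rw [Finset.card_sdiff_of_subset (by simp)]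
  rw [Finset.card_insert_of_notMem (by simpa using hvw), Finset.card_singleton,
    Finset.card_univ, ← hn]
  push_cast [Nat.cast_sub (by omega : 2 ≤ n)]
  ring

theorem deg_o (x : V) (hxv : x ≠ v) (hxw : x ≠ w) : (G.degree x : ℝ) = (n : ℝ) - 1 := by
  rw [SimpleGraph.degree, nbr_o G n hn hn3 v w hvw hadj x hxv hxw]
  rw [Finset.card_sdiff_of_subset (by simp), Finset.card_singleton, Finset.card_univ, ← hn]
  push_cast [Nat.cast_sub (by omega : 1 ≤ n)]
  ring

theorem sum_nbr_v (f : V → ℝ) :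
    ∑ y ∈ G.neighborFinset v, f y = (∑ y, f y) - f v - f w := by
  rw [nbr_v G n hn hn3 v w hvw hadj, Finset.sum_sdiff_eq_sub (by simp)]
  rw [Finset.sum_insert (by simpa using hvw), Finset.sum_singleton]
  ring

theorem sum_nbr_w (f : V → ℝ) :
    ∑ y ∈ G.neighborFinset w, f y = (∑ y, f y) - f v - f w := by
  rw [nbr_w G n hn hn3 v w hvw hadj, Finset.sum_sdiff_eq_sub (by simp)]
  rw [Finset.sum_insert (by simpa using hvw), Finset.sum_singleton]
  ring

theorem sum_nbr_o (f : V → ℝ) (x : V) (hxv : x ≠ v) (hxw : x ≠ w) :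
    ∑ y ∈ G.neighborFinset x, f y = (∑ y, f y) - f x := by
  rw [nbr_o G n hn hn3 v w hvw hadj x hxv hxw, Finset.sum_sdiff_eq_sub (by simp),
    Finset.sum_singleton]

end Aux

/-- The complete graph on `n ≥ 3` vertices with one edge removed has
largest normalized Laplacian eigenvalue exactly `(n+1)/(n-1)`. -/
theorem maxEigenvalue_completeMinusEdge {V : Type*} [Fintype V] [DecidableEq V]
    (G : SimpleGraph V) [DecidableRel G.Adj] (n : ℕ) (hn : n = Fintype.card V)
    (hn3 : 3 ≤ n) (v w : V) (hvw : v ≠ w)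
    (hadj : ∀ a b : V, G.Adj a b ↔ (a ≠ b ∧ ¬((a = v ∧ b = w) ∨ (a = w ∧ b = v)))) :
    IsMaxNormLapEigenvalue G (((n : ℝ) + 1) / ((n : ℝ) - 1)) := by
  have hN1 : (0 : ℝ) < (n : ℝ) - 1 := by
    have : (3 : ℝ) ≤ (n : ℝ) := by exact_mod_cast hn3
    linarith
  have hN2 : (0 : ℝ) < (n : ℝ) - 2 := by
    have : (3 : ℝ) ≤ (n : ℝ) := by exact_mod_cast hn3
    linarith
  have hμ : (1 : ℝ) < ((n : ℝ) + 1) / ((n : ℝ) - 1) := by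
    rw [lt_div_iff₀ hN1]; linarith
  -- sums over univ \ {v,w}
  have hcard2 : ((univ \ {v, w} : Finset V).card : ℝ) = (n : ℝ) - 2 := by
    rw [Finset.card_sdiff_of_subset (by simp), Finset.card_insert_of_notMem (by simpa using hvw),
      Finset.card_singleton, Finset.card_univ, ← hn]
    push_cast [Nat.cast_sub (by omega : 2 ≤ n)]
    ring
  constructor
  · -- existence
    set f : V → ℝ := fun x => if x = v ∨ x = w then (n : ℝ) - 1 else -2 with hf
    refine ⟨f, ?_, ?_⟩
    · intro h
      have : f v = 0 := congrFun h v
      simp [hf] at this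
      linarith
    · have hS : ∑ y, f y = 2 := by
        have := Finset.sum_sdiff_eq_sub (f := f) (s₁ := ({v, w} : Finset V)) (s₂ := univ) (by simp)
        have h1 : ∑ y ∈ (univ \ {v, w} : Finset V), f y
            = ((univ \ {v, w} : Finset V).card : ℝ) * (-2) := by
          rw [Finset.sum_congr rfl (fun x hx => ?_), Finset.sum_const, nsmul_eq_mul]
          simp only [mem_sdiff, mem_insert, mem_singleton] at hx
          simp [hf, hx.2]
        have h2 : ∑ y ∈ ({v, w} : Finset V), f y = 2 * ((n : ℝ) - 1) := by
          rw [Finset.sum_insert (by simpa using hvw), Finset.sum_singleton]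
          simp [hf]
          ring
        rw [h1, hcard2] at this
        -- this : ((n:ℝ)-2) * (-2) = ∑ univ - ∑ {v,w}
        have := this
        nlinarith [h2, this]
      funext x
      simp only [normLap, Pi.smul_apply, smul_eq_mul]
      by_cases hxv : x = v
      · subst hxv
        rw [sum_nbr_v G n hn hn3 x w hvw hadj f, deg_v G n hn hn3 x w hvw hadj, hS]
        have hfv : f x = (n : ℝ) - 1 := by simp [hf]
        have hfw : f w = (n : ℝ) - 1 := by simp [hf]
        rw [hfv, hfw]
        field_simp
        ring
      · by_cases hxw : x = w
        · subst hxw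
          rw [sum_nbr_w G n hn hn3 v x hvw hadj f, deg_w G n hn hn3 v x hvw hadj, hS]
          have hfv : f v = (n : ℝ) - 1 := by simp [hf]
          have hfw : f x = (n : ℝ) - 1 := by simp [hf]
          rw [hfv, hfw]
          field_simp
          ring
        · rw [sum_nbr_o G n hn hn3 v w hvw hadj f x hxv hxw,
            deg_o G n hn hn3 v w hvw hadj x hxv hxw, hS]
          have hfx : f x = -2 := by simp [hf, hxv, hxw]
          rw [hfx]
          field_simp
          ring
  · -- maximality
    rintro ν ⟨f, hf0, hfe⟩
    by_contra hlt
    push_neg at hlt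
    set S := ∑ y, f y with hSdef
    have hν1 : 1 < ν := lt_trans hμ hlt
    have hνN : (n : ℝ) + 1 < ν * ((n : ℝ) - 1) := by
      rw [div_lt_iff₀ hN1] at hlt; linarith
    -- eigen equations
    have key : ∀ x : V, (1 - ν) * f x * (G.degree x : ℝ) = ∑ y ∈ G.neighborFinset x, f y := by
      intro x
      have hx := congrFun hfe x
      simp only [normLap, Pi.smul_apply, smul_eq_mul] at hx
      have hd : (0 : ℝ) < (G.degree x : ℝ) := by
        by_cases hxv : x = v
        · rw [hxv, deg_v G n hn hn3 v w hvw hadj]; linarith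
        · by_cases hxw : x = w
          · rw [hxw, deg_w G n hn hn3 v w hvw hadj]; linarith
          · rw [deg_o G n hn hn3 v w hvw hadj x hxv hxw]; linarith
      field_simp at hx
      nlinarith [hx]
    have Ev : (1 - ν) * f v * ((n : ℝ) - 2) = S - f v - f w := by
      have := key v
      rwa [deg_v G n hn hn3 v w hvw hadj, sum_nbr_v G n hn hn3 v w hvw hadj f] at this
    have Ew : (1 - ν) * f w * ((n : ℝ) - 2) = S - f v - f w := by
      have := key w
      rwa [deg_w G n hn hn3 v w hvw hadj, sum_nbr_w G n hn hn3 v w hvw hadj f] at this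
    have Eo : ∀ x : V, x ≠ v → x ≠ w → (1 - ν) * f x * ((n : ℝ) - 1) = S - f x := by
      intro x hxv hxw
      have := key x
      rwa [deg_o G n hn hn3 v w hvw hadj x hxv hxw,
        sum_nbr_o G n hn hn3 v w hvw hadj f x hxv hxw] at this
    -- f v = f w
    have hvw_eq : f v = f w := by
      have h := sub_eq_zero.mpr (Ev.trans Ew.symm)
      have : (1 - ν) * ((n : ℝ) - 2) * (f v - f w) = 0 := by ring_nf; ring_nf at h; linarith
      have h1 : (1 - ν) * ((n : ℝ) - 2) ≠ 0 :=
        mul_ne_zero (by linarith) (by linarith)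
      have := mul_eq_zero.mp this
      rcases this with h | h
      · exact absurd h h1
      · linarith [sub_eq_zero.mp h]
    -- c := n - ν(n-1) < 0
    set c : ℝ := (n : ℝ) - ν * ((n : ℝ) - 1) with hc
    have hcneg : c < 0 := by rw [hc]; linarith
    have hco : ∀ x : V, x ≠ v → x ≠ w → f x = S / c := by
      intro x hxv hxw
      have h := Eo x hxv hxw
      have h2 : c * f x = S := by rw [hc]; ring_nf; ring_nf at h; linarith
      rw [eq_div_iff (ne_of_lt hcneg)]
      linarith [h2]
    -- sum identity: S = 2 f v + (n-2) * (S / c)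
    have hSsum : S = 2 * f v + ((n : ℝ) - 2) * (S / c) := by
      have hsplit := Finset.sum_sdiff_eq_sub (f := f) (s₁ := ({v, w} : Finset V)) (s₂ := univ)
        (by simp : ({v, w} : Finset V) ⊆ univ)
      have h1 : ∑ y ∈ (univ \ {v, w} : Finset V), f y
          = ((univ \ {v, w} : Finset V).card : ℝ) * (S / c) := by
        rw [Finset.sum_congr rfl (fun x hx => ?_), Finset.sum_const, nsmul_eq_mul]
        simp only [mem_sdiff, mem_insert, mem_singleton] at hx
        exact hco x (by tauto) (by tauto)
      have h2 : ∑ y ∈ ({v, w} : Finset V), f y = 2 * f v := by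
        rw [Finset.sum_insert (by simpa using hvw), Finset.sum_singleton, ← hvw_eq]
        ring
      rw [h1, hcard2, h2] at hsplit
      linarith [hsplit]
    -- derive f v = 0
    have hfv0 : f v = 0 := by
      set b : ℝ := S / c with hb
      have hcne : c ≠ 0 := ne_of_lt hcneg
      have hSb : S = c * b := by rw [hb, mul_comm, div_mul_cancel₀ _ hcne]
      -- (1-ν) f v = b
      have e1 : (1 - ν) * f v = b := by
        have := Ev
        rw [← hvw_eq] at this
        -- (1-ν) f v (n-2) = S - 2 f v = (n-2) b   from hSsum
        have h2 : S - 2 * f v = ((n : ℝ) - 2) * b := by rw [hSsum]; ring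
        have h3 : (1 - ν) * f v * ((n : ℝ) - 2) = ((n : ℝ) - 2) * b := by linarith
        have hne : ((n : ℝ) - 2) ≠ 0 := by linarith
        field_simp at h3
        rcases mul_eq_mul_right_iff.mp (by linarith : (1 - ν) * f v * ((n:ℝ)-2) = b * ((n:ℝ)-2)) with h | h
        · exact h
        · exact absurd h hne
      -- (2 - ν(n-1)) b = 2 f v
      have e2 : (2 - ν * ((n : ℝ) - 1)) * b = 2 * f v := by
        have : c * b = 2 * f v + ((n : ℝ) - 2) * b := by rw [← hSb]; exact hSsum
        rw [hc] at this; linarith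
      -- combine
      have e3 : (2 - ν * ((n : ℝ) - 1)) * ((1 - ν) * f v) = 2 * f v := by rw [e1]; exact e2
      have e4 : f v * (ν * (ν * ((n : ℝ) - 1) - ((n : ℝ) + 1))) = 0 := by linear_combination e3
      have hpos : ν * (ν * ((n : ℝ) - 1) - ((n : ℝ) + 1)) > 0 :=
        mul_pos (by linarith) (by linarith)
      rcases mul_eq_zero.mp e4 with h | h
      · exact h
      · linarith
    have hb0 : S / c = 0 := by
      have e1 := Ev
      rw [hfv0, ← hvw_eq, hfv0] at e1
      have hS0 : S = 0 := by nlinarith [e1]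
      simp [hS0]
    apply hf0
    funext x
    by_cases hxv : x = v
    · rw [hxv]; exact hfv0
    · by_cases hxw : x = w
      · rw [hxw, ← hvw_eq]; exact hfv0
      · have := hco x hxv hxw
        rw [this, hb0]
        rfl
end

section
/- Let n be odd, n ≥ 3, and let G be the graph on n vertices formed by two copies of the complete graph K_{(n+1)/2} sharing exactly one common vertex (equivalently, the complement of G is the complete bipartite graph with both parts of size (n-1)/2). Then the largest eigenvalue of the normalized graph Laplacian of G is exactly (n+1)/(n-1). -/
open Finset

/-!
The eigenvalue equation `L f = ν f` at `x` reads `∑_{y ∈ N[x]} f y = ((1 - ν) d(x) + 1) f x`,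
where the closed neighbourhood `N[x]` is the complement of the neighbourhood of `x` in `Gᶜ`.
For `x ∈ P` the left side is `∑ f - ∑_Q f`, independent of `x`; likewise on `Q`, and the
centre `c` sees every vertex. With `s = (1 - ν) k + 1` and `a`, `b` the sums of `f` over `P`, `Q`,
this gives `s a = k (a + f c)`, `s b = k (b + f c)` and `a + b = 2 (s - 1) f c`, hence
`s (s - k - 1) f c = 0`. If `ν > (k + 1) / k` then `s < 0`, which forces `f = 0`. The value
`(k + 1) / k`, where `s = 0`, is attained by `f = 1` off the centre and `f c = -k`.
-/

namespace SimpleGraph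

variable {V : Type*} [Fintype V] [DecidableEq V] {G : SimpleGraph V} [DecidableRel G.Adj]

theorem insert_neighborFinset_eq_compl (x : V) :
    insert x (G.neighborFinset x) = (Gᶜ.neighborFinset x)ᶜ := by
  ext y
  by_cases h : x = y <;> simp [h, compl_adj, eq_comm]

theorem degree_add_degree_compl_add_one (x : V) :
    G.degree x + Gᶜ.degree x + 1 = Fintype.card V := by
  have := G.degree_lt_card_verts x
  rw [degree_compl]
  omega

theorem normLap_apply_eq_iff {f : V → ℝ} {ν : ℝ} {x : V} (hx : G.degree x ≠ 0) :
    normLap G f x = ν * f x ↔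
      ∑ y, f y - ∑ y ∈ Gᶜ.neighborFinset x, f y = ((1 - ν) * G.degree x + 1) * f x := by
  rw [← sum_compl_add_sum (Gᶜ.neighborFinset x), add_sub_cancel_right,
    ← insert_neighborFinset_eq_compl, sum_insert (G.notMem_neighborFinset_self x), normLap]
  have hd : (G.degree x : ℝ) ≠ 0 := Nat.cast_ne_zero.mpr hx
  constructor <;> intro h
  · field_simp at h; linear_combination -h
  · field_simp; linear_combination -h

/-- The windmill graph `Wd(k + 1, 2)`: two copies of `K_{k+1}`, on `P ∪ {c}` and `Q ∪ {c}`,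
glued at `c`. -/
structure IsWindmill (G : SimpleGraph V) [DecidableRel G.Adj] (P Q : Finset V) (c : V) (k : ℕ) :
    Prop where
  compl_adj_iff : ∀ x y, Gᶜ.Adj x y ↔ (x ∈ P ∧ y ∈ Q) ∨ (x ∈ Q ∧ y ∈ P)
  disjoint : Disjoint P Q
  compl_union : (P ∪ Q)ᶜ = {c}
  card_left : #P = k
  card_right : #Q = k

namespace IsWindmill

variable {P Q : Finset V} {c : V} {k : ℕ} (h : G.IsWindmill P Q c k)
include h

theorem symm : G.IsWindmill Q P c k where
  compl_adj_iff x y := (h.compl_adj_iff x y).trans or_comm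
  disjoint := h.disjoint.symm
  compl_union := union_comm P Q ▸ h.compl_union
  card_left := h.card_right
  card_right := h.card_left

theorem center_notMem_union : c ∉ P ∪ Q :=
  mem_compl.mp (h.compl_union ▸ mem_singleton_self c)

theorem mem_or_mem_or_eq_center (x : V) : x ∈ P ∨ x ∈ Q ∨ x = c := by
  by_contra hx
  have : x ∈ (P ∪ Q)ᶜ := by simp_all
  simp_all [h.compl_union]

theorem sum_univ (f : V → ℝ) : ∑ y, f y = ∑ y ∈ P, f y + ∑ y ∈ Q, f y + f c := by
  rw [← sum_compl_add_sum (P ∪ Q), h.compl_union, sum_singleton, sum_union h.disjoint]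
  ring

theorem card_eq_two_mul_add_one : Fintype.card V = 2 * k + 1 := by
  have := congrArg card h.compl_union
  rw [card_compl, card_union_of_disjoint h.disjoint, h.card_left, h.card_right,
    card_singleton] at this
  have := card_le_univ (P ∪ Q)
  rw [card_union_of_disjoint h.disjoint, h.card_left, h.card_right] at this
  omega

theorem compl_neighborFinset_of_mem_left {x : V} (hx : x ∈ P) : Gᶜ.neighborFinset x = Q := by
  ext y
  simp [h.compl_adj_iff, hx, Finset.disjoint_left.mp h.disjoint hx]

theorem compl_neighborFinset_center : Gᶜ.neighborFinset c = ∅ := by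
  have := h.center_notMem_union
  ext y
  simp_all [h.compl_adj_iff]

theorem degree_of_mem_left {x : V} (hx : x ∈ P) : G.degree x = k := by
  have := G.degree_add_degree_compl_add_one x
  rw [← card_neighborFinset_eq_degree Gᶜ, h.compl_neighborFinset_of_mem_left hx, h.card_right,
    h.card_eq_two_mul_add_one] at this
  omega

theorem degree_center : G.degree c = 2 * k := by
  have := G.degree_add_degree_compl_add_one c
  rw [← card_neighborFinset_eq_degree Gᶜ, h.compl_neighborFinset_center, card_empty,
    h.card_eq_two_mul_add_one] at this
  omega

theorem normLap_apply_eq_iff_of_mem_left (hk : k ≠ 0) {f : V → ℝ} {ν : ℝ} {x : V}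
    (hx : x ∈ P) :
    normLap G f x = ν * f x ↔ ∑ y, f y - ∑ y ∈ Q, f y = ((1 - ν) * k + 1) * f x := by
  rw [normLap_apply_eq_iff (h.degree_of_mem_left hx ▸ hk), h.compl_neighborFinset_of_mem_left hx,
    h.degree_of_mem_left hx]

theorem normLap_apply_center_eq_iff (hk : k ≠ 0) {f : V → ℝ} {ν : ℝ} :
    normLap G f c = ν * f c ↔ ∑ y, f y = (2 * ((1 - ν) * k + 1) - 1) * f c := by
  rw [normLap_apply_eq_iff (by rw [h.degree_center]; omega), h.compl_neighborFinset_center,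
    sum_empty, sub_zero, h.degree_center]
  push_cast
  ring_nf

theorem normLap_eq_smul_iff (hk : k ≠ 0) {f : V → ℝ} {ν : ℝ} :
    normLap G f = ν • f ↔
      (∀ x ∈ P, ∑ y, f y - ∑ y ∈ Q, f y = ((1 - ν) * k + 1) * f x) ∧
      (∀ x ∈ Q, ∑ y, f y - ∑ y ∈ P, f y = ((1 - ν) * k + 1) * f x) ∧
      ∑ y, f y = (2 * ((1 - ν) * k + 1) - 1) * f c := by
  simp only [funext_iff, Pi.smul_apply, smul_eq_mul]
  constructor
  · intro hf
    exact ⟨fun x hx => (h.normLap_apply_eq_iff_of_mem_left hk hx).mp (hf x),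
      fun x hx => (h.symm.normLap_apply_eq_iff_of_mem_left hk hx).mp (hf x),
      (h.normLap_apply_center_eq_iff hk).mp (hf c)⟩
  · rintro ⟨hP, hQ, hc⟩ x
    rcases h.mem_or_mem_or_eq_center x with hx | hx | rfl
    · exact (h.normLap_apply_eq_iff_of_mem_left hk hx).mpr (hP x hx)
    · exact (h.symm.normLap_apply_eq_iff_of_mem_left hk hx).mpr (hQ x hx)
    · exact (h.normLap_apply_center_eq_iff hk).mpr hc

theorem isNormLapEigenvalue (hk : k ≠ 0) : IsNormLapEigenvalue G ((k + 1) / k) := by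
  set f : V → ℝ := fun x => if x = c then -(k : ℝ) else 1
  have hs : (1 - (k + 1) / k) * (k : ℝ) + 1 = 0 := by field_simp; ring
  have hsum {s : Finset V} (hc : c ∉ s) : ∑ y ∈ s, f y = #s :=
    (sum_congr rfl fun y hy => if_neg (ne_of_mem_of_not_mem hy hc)).trans (by simp)
  have hcPQ := not_or.mp (mem_union.not.mp h.center_notMem_union)
  have hP : ∑ y ∈ P, f y = k := h.card_left ▸ hsum hcPQ.1
  have hQ : ∑ y ∈ Q, f y = k := h.card_right ▸ hsum hcPQ.2
  refine ⟨f, fun h0 => by simpa [f, hk] using congrFun h0 c, ?_⟩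
  refine (h.normLap_eq_smul_iff hk).mpr ⟨fun x hx => ?_, fun x hx => ?_, ?_⟩ <;>
    simp [h.sum_univ, hP, hQ, hs, f]

theorem eq_zero_of_normLap_eq_smul (hk : k ≠ 0) {f : V → ℝ} {ν : ℝ}
    (hf : normLap G f = ν • f) (hν : (k + 1) / k < ν) : f = 0 := by
  have hk' : (0 : ℝ) < k := Nat.cast_pos.mpr (Nat.pos_of_ne_zero hk)
  obtain ⟨hP, hQ, hc⟩ := (h.normLap_eq_smul_iff hk).mp hf
  rw [h.sum_univ] at hP hQ hc
  set a := ∑ y ∈ P, f y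
  set b := ∑ y ∈ Q, f y
  set s := (1 - ν) * k + 1 with hs_def
  have hs : s < 0 := by
    rw [div_lt_iff₀ hk'] at hν
    linarith
  have hsumP : k * (a + f c) = s * a := by
    have := sum_congr rfl hP
    simp only [sum_const, h.card_left, nsmul_eq_mul, ← mul_sum] at this
    linear_combination this
  have hsumQ : k * (b + f c) = s * b := by
    have := sum_congr rfl hQ
    simp only [sum_const, h.card_right, nsmul_eq_mul, ← mul_sum] at this
    linear_combination this
  have hfc : f c = 0 := by
    have : s * (s - k - 1) * f c = 0 := by
      linear_combination -((s - k) * hc + hsumP + hsumQ) / 2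
    exact (mul_eq_zero.mp this).resolve_left (mul_ne_zero hs.ne (by linarith))
  have ha : a = 0 := by
    have : (s - k) * a = 0 := by linear_combination -hsumP + k * hfc
    exact (mul_eq_zero.mp this).resolve_left (by linarith)
  have hb : b = 0 := by
    have : (s - k) * b = 0 := by linear_combination -hsumQ + k * hfc
    exact (mul_eq_zero.mp this).resolve_left (by linarith)
  funext x
  rcases h.mem_or_mem_or_eq_center x with hx | hx | rfl
  · have : s * f x = 0 := by linear_combination -hP x hx + ha + hfc
    exact (mul_eq_zero.mp this).resolve_left hs.ne
  · have : s * f x = 0 := by linear_combination -hQ x hx + hb + hfc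
    exact (mul_eq_zero.mp this).resolve_left hs.ne
  · exact hfc

theorem isMaxNormLapEigenvalue (hk : k ≠ 0) : IsMaxNormLapEigenvalue G ((k + 1) / k) :=
  ⟨h.isNormLapEigenvalue hk, fun _ ⟨_, hf0, hf⟩ =>
    not_lt.mp fun hν => hf0 (h.eq_zero_of_normLap_eq_smul hk hf hν)⟩

end IsWindmill

end SimpleGraph

theorem maxEigenvalue_twoCliques_general {V : Type*} [Fintype V] [DecidableEq V]
    (G : SimpleGraph V) [DecidableRel G.Adj] (n : ℕ) (hn : n = Fintype.card V)
    (hn3 : 3 ≤ n) (P Q : Finset V) (hPQ : Disjoint P Q)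
    (hP : 2 * (P.card : ℝ) = (n : ℝ) - 1) (hQ : 2 * (Q.card : ℝ) = (n : ℝ) - 1)
    (hcompl : ∀ x y : V, Gᶜ.Adj x y ↔ ((x ∈ P ∧ y ∈ Q) ∨ (x ∈ Q ∧ y ∈ P))) :
    IsMaxNormLapEigenvalue G (((n : ℝ) + 1) / ((n : ℝ) - 1)) := by
  have hQP : #Q = #P := by exact_mod_cast (by linarith : (#Q : ℝ) = #P)
  have hnP : n = 2 * #P + 1 := by exact_mod_cast (by linarith : (n : ℝ) = 2 * #P + 1)
  obtain ⟨c, hc⟩ : ∃ c, (P ∪ Q)ᶜ = {c} :=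
    card_eq_one.mp (by rw [card_compl, card_union_of_disjoint hPQ]; omega)
  have hG : G.IsWindmill P Q c #P := ⟨hcompl, hPQ, hc, rfl, hQP⟩
  have hμ : ((n : ℝ) + 1) / ((n : ℝ) - 1) = (#P + 1) / #P := by
    rw [hnP]
    push_cast
    rw [add_sub_cancel_right, add_assoc, one_add_one_eq_two, ← mul_add_one, mul_div_mul_left]
    norm_num
  rw [hμ]
  exact hG.isMaxNormLapEigenvalue (by omega)

/-- For odd `n ≥ 3`, the graph made of two copies of `K_{(n+1)/2}`
sharing exactly one vertex (equivalently, whose complement is the complete bipartite graph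
with both parts of size `(n-1)/2`) has largest normalized Laplacian eigenvalue exactly
`(n+1)/(n-1)`. -/
theorem maxEigenvalue_twoCliques {V : Type*} [Fintype V] [DecidableEq V]
    (G : SimpleGraph V) [DecidableRel G.Adj] (n : ℕ) (hn : n = Fintype.card V)
    (hodd : Odd n) (hn3 : 3 ≤ n) (P Q : Finset V) (hPQ : Disjoint P Q)
    (hP : 2 * (P.card : ℝ) = (n : ℝ) - 1) (hQ : 2 * (Q.card : ℝ) = (n : ℝ) - 1)
    (hcompl : ∀ x y : V, Gᶜ.Adj x y ↔ ((x ∈ P ∧ y ∈ Q) ∨ (x ∈ Q ∧ y ∈ P))) :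
    IsMaxNormLapEigenvalue G (((n : ℝ) + 1) / ((n : ℝ) - 1)) :=
  maxEigenvalue_twoCliques_general G n hn hn3 P Q hPQ hP hQ hcompl
end

section
/- Let G be a simple graph on n vertices with no isolated vertices and let d_min be its minimum vertex degree. If d_min ≤ (n-1)/2, then the largest eigenvalue λ_n of the normalized graph Laplacian of G satisfies λ_n ≥ 1 + 1/√(d_min (n − 1 − d_min)). -/
open Finset

/-!
Let `v` be a vertex of minimum degree `d`, `N` its neighbourhood and `S` the remaining
`m = n - 1 - d` vertices. Test the Rayleigh quotient of the normalized Laplacian on the vector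
equal to `r = √(dm)` at `v`, `-1` on `N` and `c = e(N,S)/m²` on `S`. The quotient depends only on
the edge counts `e(N,N)`, `e(N,S)`, `e(S,S)` and decreases in `e(N,N)` and `e(S,S)`; at their
maximal values `d(d-1)` and `m(m-1)` the bound `1 + 1/r` becomes a cubic inequality in `e(N,S)`.
The largest eigenvalue dominates every Rayleigh quotient because the normalized Laplacian is
similar to the symmetric matrix `I - D^{-1/2} A D^{-1/2}`.
-/

open Matrix

theorem LinearMap.IsSymmetric.exists_hasEigenvalue_forall_inner_le {E : Type*}
    [NormedAddCommGroup E] [InnerProductSpace ℝ E] [FiniteDimensional ℝ E] [Nontrivial E]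
    {T : E →ₗ[ℝ] E} (hT : T.IsSymmetric) :
    ∃ μ, Module.End.HasEigenvalue T μ ∧ ∀ x, inner ℝ (T x) x ≤ μ * ‖x‖ ^ 2 := by
  refine ⟨_, hT.hasEigenvalue_iSup_of_finiteDimensional, fun x => ?_⟩
  obtain rfl | hx := eq_or_ne x 0
  · simp
  have hbdd : BddAbove (Set.range fun y : {y : E // y ≠ 0} =>
      RCLike.re (inner ℝ (T y) (y : E)) / ‖(y : E)‖ ^ 2) :=
    ⟨‖LinearMap.toContinuousLinearMap T‖, by
      rintro _ ⟨y, rfl⟩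
      exact (le_abs_self _).trans ((LinearMap.toContinuousLinearMap T).rayleighQuotient_le_norm y)⟩
  have := le_ciSup hbdd ⟨x, hx⟩
  rwa [RCLike.re_to_real, div_le_iff₀ (by positivity)] at this

theorem quadratic_nonneg_of_le {a b c K x : ℝ} (ha : 0 < a) (hxK : x ≤ K)
    (h : b ^ 2 ≤ 4 * a * c ∨ (2 * a * K ≤ b ∧ 0 ≤ a * K ^ 2 - b * K + c)) :
    0 ≤ a * x ^ 2 - b * x + c := by
  rcases h with hdisc | ⟨hK, hqK⟩
  · nlinarith [sq_nonneg (2 * a * x - b)]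
  · have hdecr : 0 ≤ (K - x) * (b - a * (x + K)) :=
      mul_nonneg (by linarith) (by nlinarith)
    nlinarith

section Inequality

variable {d m r E : ℝ}

theorem mem_Icc_of_sq_eq_mul (hd : 0 ≤ d) (hdm : d ≤ m) (hr : r ^ 2 = d * m) (hr0 : 0 ≤ r) :
    r ∈ Set.Icc d m := by
  constructor <;> nlinarith

/-- `-m⁴ (r ⟨f, A f⟩ + ⟨f, D f⟩)` for the test vector `f` with `c = E/m²`, at the extremal edge
counts `e(N,N) = d(d-1)` and `e(S,S) = m(m-1)`. -/
def extremalPoly (d m r E : ℝ) : ℝ :=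
  d * r ^ 2 * m ^ 4 - d * (d - 1) * (r + 1) * m ^ 4 - (E + d) * m ^ 4 + 2 * E ^ 2 * r * m ^ 2
    - E ^ 2 * (m * (m - 1)) * (r + 1) - E ^ 3

theorem extremalPoly_nonneg_of_lt (hd : 1 ≤ d) (hdm : d + 1 ≤ m) (hr : r ^ 2 = d * m)
    (hr0 : 0 < r) (hE : E ≤ d * m) : 0 ≤ extremalPoly d m r E := by
  obtain ⟨hrd, hrm⟩ := mem_Icc_of_sq_eq_mul (by linarith) (by linarith) hr hr0.le
  set β := m * (r - 1) + (r + 1 - d)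
  set α := d * m - (d - 1) * (r + 1) - 1
  have hβ : 1 ≤ β := by nlinarith
  have hαm : m ≤ 2 * α := by
    have : 2 * r ≤ d + m := by nlinarith [sq_nonneg (d - m)]
    nlinarith
  have hm : 0 < m := by linarith
  -- `extremalPoly d m r E = Q(E) + E²(dm - E)` for the convex quadratic `Q` below
  have hQ : 0 ≤ (m * β) * E ^ 2 - m ^ 4 * E + d * m ^ 4 * α := by
    apply quadratic_nonneg_of_le (mul_pos hm (by linarith)) hE
    rcases le_or_gt (2 * d * β) (m ^ 2) with hβm | hβm
    · refine Or.inr ⟨by nlinarith, ?_⟩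
      have : 0 ≤ d * β + m * α - m ^ 2 := by
        have : d * β + m * α - m ^ 2 = m * (d - 1) * (m - 2) + m * (r - 2) + d * (r + 1 - d) := by
          ring
        nlinarith [mul_nonneg (by linarith : (0:ℝ) ≤ d - 1) (by linarith : (0:ℝ) ≤ m - 2),
            mul_nonneg (by linarith : (0:ℝ) ≤ d - 1) (by linarith : (0:ℝ) ≤ r - 1),
            mul_nonneg (by linarith : (0:ℝ) ≤ r - d) (by linarith : (0:ℝ) ≤ m - r)]
      have hdm3 : 0 ≤ d * m ^ 3 := by positivity
      nlinarith
    · left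
      have h3 : m ^ 3 ≤ 4 * d * β * α := by nlinarith
      have h5 : 0 ≤ m ^ 5 := by positivity
      nlinarith [mul_le_mul_of_nonneg_left h3 h5]
  have hE2 : 0 ≤ E ^ 2 * (d * m - E) := mul_nonneg (sq_nonneg E) (by linarith)
  have hsplit : extremalPoly d m r E
      = ((m * β) * E ^ 2 - m ^ 4 * E + d * m ^ 4 * α) + E ^ 2 * (d * m - E) := by
    rw [extremalPoly]
    linear_combination (d * m ^ 4) * hr
  linarith

end Inequality

theorem extremalPoly_nonneg {d m : ℕ} (hd : 1 ≤ d) (hdm : d ≤ m) {r E : ℝ} (hr : r ^ 2 = d * m)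
    (hr0 : 0 < r) (hE0 : 0 ≤ E) (hE : E ≤ d * m) (hEm : d * m ≤ E + m * (m - 1)) :
    0 ≤ extremalPoly d m r E := by
  have hd' : (1 : ℝ) ≤ d := by exact_mod_cast hd
  obtain rfl | hlt := hdm.eq_or_lt
  · obtain ⟨-, hrm⟩ := mem_Icc_of_sq_eq_mul (by linarith) le_rfl hr hr0.le
    obtain rfl : r = d := by nlinarith
    have hfactor : extremalPoly d d d E = E * (E - d) * (d ^ 3 - E) := by
      rw [extremalPoly]
      ring
    rw [hfactor]
    have : E ≤ (d : ℝ) ^ 3 := by nlinarith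
    exact mul_nonneg (mul_nonneg hE0 (by nlinarith)) (by linarith)
  · exact extremalPoly_nonneg_of_lt hd' (by exact_mod_cast hlt) hr hr0 hE

theorem one_add_one_div_sqrt_le_quotient {d m T E S : ℕ} (hd : 1 ≤ d) (hdm : d ≤ m)
    (hT : T + d ≤ d * d) (hS : S + m ≤ m * m) (hE : E ≤ d * m) (hES : d * m ≤ E + S)
    {r c : ℝ} (hr : r = √(d * m)) (hc : c = E / m ^ 2) :
    1 + 1 / r ≤ ((r ^ 2 * d + (d + T + E) + c ^ 2 * (E + S))
      - (-(2 * r * d) + T - 2 * c * E + c ^ 2 * S)) / (r ^ 2 * d + (d + T + E) + c ^ 2 * (E + S)) := by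
  have hd' : (1 : ℝ) ≤ d := by exact_mod_cast hd
  have hm : (d : ℝ) ≤ m := by exact_mod_cast hdm
  have hr0 : 0 < r := hr ▸ Real.sqrt_pos.2 (mul_pos (by linarith) (by linarith))
  have hr2 : r ^ 2 = d * m := hr ▸ Real.sq_sqrt (by positivity)
  have hT' : (T : ℝ) ≤ d * (d - 1) := by
    have : (T : ℝ) + d ≤ d * d := by exact_mod_cast hT
    linarith
  have hS' : (S : ℝ) ≤ m * (m - 1) := by
    have : (S : ℝ) + m ≤ m * m := by exact_mod_cast hS
    linarith
  have hE' : (E : ℝ) ≤ d * m := by exact_mod_cast hE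
  have hES' : (d : ℝ) * m ≤ E + S := by exact_mod_cast hES
  have hpoly := extremalPoly_nonneg hd hdm hr2 hr0 (Nat.cast_nonneg E) hE' (by linarith)
  rw [extremalPoly] at hpoly
  have hmono : 0 ≤ (d * (d - 1) - T) * (r + 1) * m ^ 4 + E ^ 2 * (m * (m - 1) - S) * (r + 1) :=
    add_nonneg (by have := sub_nonneg.2 hT'; positivity) (by have := sub_nonneg.2 hS'; positivity)
  have hm0 : (0 : ℝ) < m := by linarith
  -- `m⁴` times the left side is `-extremalPoly d m r E` minus the slack `hmono`
  have hkey : r * (-(2 * r * d) + T - 2 * c * E + c ^ 2 * S)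
      + (r ^ 2 * d + (d + T + E) + c ^ 2 * (E + S)) ≤ 0 := by
    rw [hc]
    field_simp
    nlinarith
  set W := r ^ 2 * d + (d + T + E) + c ^ 2 * (E + S)
  set C := -(2 * r * d) + T - 2 * c * E + c ^ 2 * S
  have hW : 0 < W := by
    have := mul_pos (pow_pos hr0 2) (by linarith : (0 : ℝ) < d)
    positivity
  have hWC : W / r ≤ -C := by
    rw [div_le_iff₀ hr0]
    linarith
  rw [le_div_iff₀ hW, add_mul, one_mul, one_div_mul_eq_div]
  linarith

namespace SimpleGraph

section Interedges

variable {V : Type*} (G : SimpleGraph V) [DecidableRel G.Adj]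

theorem sum_sum_ite_adj_eq_card_interedges (s t : Finset V) :
    ∑ x ∈ s, ∑ y ∈ t, (if G.Adj x y then (1 : ℝ) else 0) = #(G.interedges s t) := by
  rw [interedges_def, card_filter, sum_product]
  push_cast
  rfl

theorem card_interedges_add_card_le (s : Finset V) : #(G.interedges s s) + #s ≤ #s * #s := by
  have hsub : G.interedges s s ⊆ s.offDiag := fun e he => by
    obtain ⟨h1, h2, hadj⟩ := G.mem_interedges_iff.1 he
    exact mem_offDiag.2 ⟨h1, h2, hadj.ne⟩
  have := card_le_card hsub
  rw [offDiag_card] at this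
  have : #s ≤ #s * #s := Nat.le_mul_self _
  omega

theorem card_interedges_comm (s t : Finset V) : #(G.interedges s t) = #(G.interedges t s) :=
  have : Std.Symm G.Adj := ⟨fun _ _ h => h.symm⟩
  Rel.card_interedges_comm s t

theorem card_interedges_singleton_left [DecidableEq V] (v : V) (t : Finset V) :
    #(G.interedges {v} t) = #{y ∈ t | G.Adj v y} := by
  rw [interedges_def, singleton_product, filter_map, card_map]
  rfl

end Interedges

variable {V : Type*} [Fintype V] (G : SimpleGraph V) [DecidableRel G.Adj]

section Blocks

variable {ι : Type*} [DecidableEq ι]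

def classEdges (φ : V → ι) (i j : ι) : ℕ := #(G.interedges {x | φ x = i} {x | φ x = j})

theorem classEdges_self_add_card_le (φ : V → ι) (i : ι) :
    G.classEdges φ i i + #{x | φ x = i} ≤ #{x | φ x = i} * #{x | φ x = i} :=
  G.card_interedges_add_card_le _

theorem classEdges_le_mul (φ : V → ι) (i j : ι) :
    G.classEdges φ i j ≤ #{x | φ x = i} * #{x | φ x = j} :=
  G.card_interedges_le_mul _ _

theorem classEdges_comm (φ : V → ι) (i j : ι) : G.classEdges φ i j = G.classEdges φ j i :=
  G.card_interedges_comm _ _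

variable [Fintype ι]

theorem dotProduct_adjMatrix_mulVec_comp (φ : V → ι) (g h : ι → ℝ) :
    (g ∘ φ) ⬝ᵥ G.adjMatrix ℝ *ᵥ (h ∘ φ) = ∑ i, ∑ j, g i * h j * G.classEdges φ i j := by
  have hblock : ∀ i j, g i * h j * G.classEdges φ i j
      = ∑ x with φ x = i, ∑ y with φ y = j, if G.Adj x y then g (φ x) * h (φ y) else 0 := by
    intro i j
    rw [classEdges, ← sum_sum_ite_adj_eq_card_interedges, mul_sum]
    refine sum_congr rfl fun x hx => ?_
    rw [mul_sum]
    refine sum_congr rfl fun y hy => ?_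
    rw [(mem_filter.1 hx).2, (mem_filter.1 hy).2, mul_ite, mul_one, mul_zero]
  simp only [hblock, dotProduct_mulVec_adjMatrix, Function.comp_apply]
  rw [← sum_fiberwise (M := ℝ) univ φ]
  refine sum_congr rfl fun i _ => ?_
  conv_rhs => rw [sum_comm]
  exact sum_congr rfl fun x _ => (sum_fiberwise (M := ℝ) univ φ _).symm

theorem sum_degree_mul_comp (φ : V → ι) (g : ι → ℝ) :
    ∑ x, (G.degree x : ℝ) * g (φ x) = ∑ i, g i * ∑ j, (G.classEdges φ i j : ℝ) := by
  have := G.dotProduct_adjMatrix_mulVec_comp φ g 1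
  simp only [Pi.one_comp, Pi.one_apply, mul_one, ← mul_sum] at this
  rw [← this, dotProduct]
  refine sum_congr rfl fun x _ => ?_
  rw [mul_comm, Function.comp_apply, ← Function.const_one, adjMatrix_mulVec_const_apply, mul_one]

theorem sum_filter_degree_eq_sum_classEdges (φ : V → ι) (i : ι) :
    ∑ x with φ x = i, (G.degree x : ℝ) = ∑ j, (G.classEdges φ i j : ℝ) := by
  have := G.sum_degree_mul_comp φ fun k => if k = i then 1 else 0
  simpa [sum_filter] using this

end Blocks

variable [DecidableEq V]

def cappedDist (v x : V) : Fin 3 := if x = v then 0 else if G.Adj v x then 1 else 2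

theorem filter_cappedDist_eq_zero (v : V) : ({x | G.cappedDist v x = 0} : Finset V) = {v} := by
  ext x
  by_cases hx : x = v <;> by_cases hadj : G.Adj v x <;> simp [cappedDist, hx, hadj]

theorem filter_cappedDist_eq_one (v : V) :
    ({x | G.cappedDist v x = 1} : Finset V) = G.neighborFinset v := by
  ext x
  rw [Finset.mem_filter]
  by_cases hx : x = v <;> by_cases hadj : G.Adj v x <;> simp [cappedDist, hx, hadj]

theorem card_filter_cappedDist_eq_one (v : V) :
    #({x | G.cappedDist v x = 1} : Finset V) = G.degree v := by
  rw [filter_cappedDist_eq_one, card_neighborFinset_eq_degree]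

theorem card_filter_cappedDist_eq_two (v : V) :
    #({x | G.cappedDist v x = 2} : Finset V) + G.degree v + 1 = Fintype.card V := by
  have := card_eq_sum_card_fiberwise (s := univ) (t := univ) (f := G.cappedDist v) (by simp)
  rw [card_univ, Fin.sum_univ_three, filter_cappedDist_eq_zero, card_filter_cappedDist_eq_one,
    card_singleton] at this
  omega

theorem classEdges_cappedDist_zero_left (v : V) (j : Fin 3) :
    G.classEdges (G.cappedDist v) 0 j = if j = 1 then G.degree v else 0 := by
  rw [classEdges, filter_cappedDist_eq_zero, card_interedges_singleton_left, filter_filter]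
  have hclass : ∀ y, (G.cappedDist v y = j ∧ G.Adj v y) ↔ (j = 1 ∧ G.Adj v y) := fun y => by
    constructor <;> rintro ⟨rfl, h⟩ <;> simp [cappedDist, h, h.ne']
  simp_rw [hclass]
  split_ifs with hj
  · simp [hj, ← card_neighborFinset_eq_degree, neighborFinset_eq_filter]
  · simp [hj]

theorem classEdges_cappedDist_one_one_add_le (v : V) :
    G.classEdges (G.cappedDist v) 1 1 + G.degree v ≤ G.degree v * G.degree v := by
  simpa only [card_filter_cappedDist_eq_one] using G.classEdges_self_add_card_le (G.cappedDist v) 1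

theorem classEdges_cappedDist_one_two_le (v : V) :
    G.classEdges (G.cappedDist v) 1 2 ≤ G.degree v * #({x | G.cappedDist v x = 2} : Finset V) := by
  simpa only [card_filter_cappedDist_eq_one] using G.classEdges_le_mul (G.cappedDist v) 1 2

theorem mul_card_le_classEdges_cappedDist {d : ℕ} (hd : ∀ x, d ≤ G.degree x) (v : V) :
    d * #({x | G.cappedDist v x = 2} : Finset V)
      ≤ G.classEdges (G.cappedDist v) 1 2 + G.classEdges (G.cappedDist v) 2 2 := by
  have hsum := G.sum_filter_degree_eq_sum_classEdges (G.cappedDist v) 2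
  rw [Fin.sum_univ_three, G.classEdges_comm (G.cappedDist v) 2 0, classEdges_cappedDist_zero_left,
    G.classEdges_comm (G.cappedDist v) 2 1] at hsum
  have hmin := card_nsmul_le_sum ({x | G.cappedDist v x = 2} : Finset V)
    (fun x => (G.degree x : ℝ)) d (fun x _ => by exact_mod_cast hd x)
  rw [hsum, nsmul_eq_mul, mul_comm] at hmin
  norm_num at hmin
  exact_mod_cast hmin

theorem dotProduct_adjMatrix_mulVec_cappedDist (v : V) (a b c : ℝ) :
    (![a, b, c] ∘ G.cappedDist v) ⬝ᵥ G.adjMatrix ℝ *ᵥ (![a, b, c] ∘ G.cappedDist v)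
      = 2 * a * b * G.degree v + b ^ 2 * G.classEdges (G.cappedDist v) 1 1
        + 2 * b * c * G.classEdges (G.cappedDist v) 1 2
        + c ^ 2 * G.classEdges (G.cappedDist v) 2 2 := by
  rw [dotProduct_adjMatrix_mulVec_comp]
  simp [Fin.sum_univ_three, classEdges_cappedDist_zero_left, G.classEdges_comm (G.cappedDist v) 1 0,
    G.classEdges_comm (G.cappedDist v) 2 0, G.classEdges_comm (G.cappedDist v) 2 1]
  ring

theorem sum_degree_mul_sq_cappedDist (v : V) (a b c : ℝ) :
    ∑ x, (G.degree x : ℝ) * (![a, b, c] ∘ G.cappedDist v) x ^ 2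
      = a ^ 2 * G.degree v
        + b ^ 2 * (G.degree v + G.classEdges (G.cappedDist v) 1 1 + G.classEdges (G.cappedDist v) 1 2)
        + c ^ 2 * (G.classEdges (G.cappedDist v) 1 2 + G.classEdges (G.cappedDist v) 2 2) := by
  refine (sum_degree_mul_comp G (G.cappedDist v) fun i => ![a, b, c] i ^ 2).trans ?_
  simp [Fin.sum_univ_three, classEdges_cappedDist_zero_left, G.classEdges_comm (G.cappedDist v) 1 0,
    G.classEdges_comm (G.cappedDist v) 2 0, G.classEdges_comm (G.cappedDist v) 2 1]

noncomputable def invSqrtDegreeMatrix : Matrix V V ℝ := diagonal fun x => (√(G.degree x))⁻¹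

noncomputable def symmNormLapMatrix : Matrix V V ℝ :=
  1 - G.invSqrtDegreeMatrix * G.adjMatrix ℝ * G.invSqrtDegreeMatrix

theorem isHermitian_symmNormLapMatrix : G.symmNormLapMatrix.IsHermitian := by
  refine isHermitian_one.sub ?_
  have := isHermitian_mul_mul_conjTranspose G.invSqrtDegreeMatrix (A := G.adjMatrix ℝ) ?_
  · simpa [invSqrtDegreeMatrix, diagonal_conjTranspose] using this
  · exact G.isSymm_adjMatrix

theorem normLap_invSqrtDegreeMatrix_mulVec (u : V → ℝ) :
    normLap G (G.invSqrtDegreeMatrix *ᵥ u)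
      = G.invSqrtDegreeMatrix *ᵥ (G.symmNormLapMatrix *ᵥ u) := by
  ext x
  simp only [normLap, symmNormLapMatrix, invSqrtDegreeMatrix, sub_mulVec, one_mulVec,
    ← mulVec_mulVec, mulVec_diagonal, Pi.sub_apply, adjMatrix_mulVec_apply, mul_sub, mul_sum]
  rw [← mul_sum, ← mul_sum, ← mul_assoc, ← mul_inv, Real.mul_self_sqrt (Nat.cast_nonneg _),
    div_eq_inv_mul]

theorem isNormLapEigenvalue_of_hasEigenvalue (hdeg : ∀ x, 0 < G.degree x) {μ : ℝ}
    (hμ : Module.End.HasEigenvalue (toEuclideanLin G.symmNormLapMatrix) μ) :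
    IsNormLapEigenvalue G μ := by
  obtain ⟨u, hu⟩ := hμ.exists_hasEigenvector
  have hMu : G.symmNormLapMatrix *ᵥ u.ofLp = μ • u.ofLp := by
    simpa using congrArg WithLp.ofLp hu.apply_eq_smul
  refine ⟨G.invSqrtDegreeMatrix *ᵥ u.ofLp, fun h => hu.2 ?_, ?_⟩
  · ext x
    have := congrFun h x
    simp only [invSqrtDegreeMatrix, mulVec_diagonal, Pi.zero_apply, mul_eq_zero,
      inv_eq_zero] at this
    exact this.resolve_left (Real.sqrt_pos.2 (Nat.cast_pos.2 (hdeg x))).ne'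
  · rw [normLap_invSqrtDegreeMatrix_mulVec, hMu, mulVec_smul]

end SimpleGraph

theorem IsMaxNormLapEigenvalue.rayleigh_le {V : Type*} [Fintype V] [DecidableEq V]
    {G : SimpleGraph V} [DecidableRel G.Adj]
    (hdeg : ∀ x, 0 < G.degree x) {lam : ℝ} (hlam : IsMaxNormLapEigenvalue G lam) (f : V → ℝ) :
    ∑ x, G.degree x * f x ^ 2 - f ⬝ᵥ G.adjMatrix ℝ *ᵥ f
      ≤ lam * ∑ x, (G.degree x : ℝ) * f x ^ 2 := by
  obtain ⟨f₀, hf₀, -⟩ := hlam.1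
  obtain ⟨x₀, -⟩ := Function.ne_iff.1 hf₀
  have : Nonempty V := ⟨x₀⟩
  have hsqrt : ∀ x, √(G.degree x : ℝ) ≠ 0 :=
    fun x => (Real.sqrt_pos.2 (Nat.cast_pos.2 (hdeg x))).ne'
  set u : V → ℝ := fun x => √(G.degree x : ℝ) * f x
  have hDu : G.invSqrtDegreeMatrix *ᵥ u = f := by
    ext x
    rw [SimpleGraph.invSqrtDegreeMatrix, mulVec_diagonal]
    exact inv_mul_cancel_left₀ (hsqrt x) (f x)
  have huu : u ⬝ᵥ u = ∑ x, G.degree x * f x ^ 2 := by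
    refine sum_congr rfl fun x _ => ?_
    rw [mul_mul_mul_comm, Real.mul_self_sqrt (Nat.cast_nonneg _), sq]
  have huMu : u ⬝ᵥ G.symmNormLapMatrix *ᵥ u
      = ∑ x, G.degree x * f x ^ 2 - f ⬝ᵥ G.adjMatrix ℝ *ᵥ f := by
    rw [SimpleGraph.symmNormLapMatrix, sub_mulVec, one_mulVec, dotProduct_sub, huu, ← mulVec_mulVec,
      ← mulVec_mulVec, hDu, dotProduct_mulVec u G.invSqrtDegreeMatrix]
    congr 2
    ext x
    rw [SimpleGraph.invSqrtDegreeMatrix, vecMul_diagonal, mul_comm]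
    exact inv_mul_cancel_left₀ (hsqrt x) (f x)
  obtain ⟨μ, hμ, hle⟩ := (isSymmetric_toEuclideanLin_iff.mpr
    G.isHermitian_symmNormLapMatrix).exists_hasEigenvalue_forall_inner_le
  have hμlam : μ ≤ lam := hlam.2 μ (G.isNormLapEigenvalue_of_hasEigenvalue hdeg hμ)
  have := hle (WithLp.toLp 2 u)
  rw [EuclideanSpace.inner_eq_star_dotProduct, ← real_inner_self_eq_norm_sq,
    EuclideanSpace.inner_eq_star_dotProduct] at this
  simp only [toLpLin_apply, star_trivial] at this
  rw [huMu, huu] at this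
  exact this.trans (mul_le_mul_of_nonneg_right hμlam (sum_nonneg fun x _ => by positivity))

/-- If the minimum degree `d` of a graph on `n` vertices with no isolated
vertices satisfies `d ≤ (n-1)/2`, then the largest normalized Laplacian eigenvalue is at
least `1 + 1/√(d(n-1-d))`. -/
theorem maxEigenvalue_ge_of_minDegree {V : Type*} [Fintype V] [DecidableEq V]
    (G : SimpleGraph V) [DecidableRel G.Adj] (n d : ℕ) (hn : n = Fintype.card V)
    (hdeg : ∀ v : V, 1 ≤ G.degree v)
    (hdmin : ∀ v : V, d ≤ G.degree v) (hdex : ∃ v : V, G.degree v = d)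
    (hdle : (d : ℝ) ≤ ((n : ℝ) - 1) / 2)
    (lam : ℝ) (hlam : IsMaxNormLapEigenvalue G lam) :
    lam ≥ 1 + 1 / Real.sqrt ((d : ℝ) * ((n : ℝ) - 1 - (d : ℝ))) := by
  obtain ⟨v, rfl⟩ := hdex
  set φ := G.cappedDist v
  set m := #({x | φ x = 2} : Finset V)
  have hm : (m : ℝ) = n - 1 - G.degree v := by
    rw [hn, ← G.card_filter_cappedDist_eq_two v]
    push_cast
    ring
  have hdm : G.degree v ≤ m := by
    have : (G.degree v : ℝ) ≤ m := by rw [hm]; linarith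
    exact_mod_cast this
  set r := √((G.degree v : ℝ) * m)
  set c := (G.classEdges φ 1 2 : ℝ) / m ^ 2
  have hquot := one_add_one_div_sqrt_le_quotient (hdeg v) hdm
    (G.classEdges_cappedDist_one_one_add_le v) (G.classEdges_self_add_card_le φ 2)
    (G.classEdges_cappedDist_one_two_le v) (G.mul_card_le_classEdges_cappedDist hdmin v)
    (r := r) (c := c) rfl rfl
  have hrayleigh := hlam.rayleigh_le hdeg (![r, -1, c] ∘ φ)
  rw [G.sum_degree_mul_sq_cappedDist, G.dotProduct_adjMatrix_mulVec_cappedDist] at hrayleigh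
  rw [← hm, ge_iff_le]
  have hd : (0 : ℝ) < G.degree v := Nat.cast_pos.2 (hdeg v)
  refine hquot.trans ((div_le_iff₀ (by positivity)).2 (by linarith))
end

section
/- Let n ≥ 3 and let a, b be positive integers with a ≤ (n-1)/2 and b ≤ n−2. Set η = √(a(n−1−a)). Then (η/(n−1)) · max(1, a + b + 2 − n) · (1/a + 1/b − 1/η) ≥ 1/η − 1/(n−1). -/
set_option maxHeartbeats 1600000 in
/-- The arithmetic lemma used in the minimum-degree lower bound: for
`n ≥ 3` and positive integers `a ≤ (n-1)/2`, `b ≤ n-2`, with `η = √(a(n-1-a))`, one has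
`(η/(n-1)) · max(1, a+b+2-n) · (1/a + 1/b - 1/η) ≥ 1/η - 1/(n-1)`. -/
theorem arithmetic_lemma_minDegree (n a b : ℕ) (hn : 3 ≤ n)
    (ha : 1 ≤ a) (hb : 1 ≤ b)
    (ha' : (a : ℝ) ≤ ((n : ℝ) - 1) / 2) (hb' : b ≤ n - 2)
    (η : ℝ) (hη : η = Real.sqrt ((a : ℝ) * ((n : ℝ) - 1 - (a : ℝ)))) :
    η / ((n : ℝ) - 1) * max 1 ((a : ℝ) + (b : ℝ) + 2 - (n : ℝ)) *
        (1 / (a : ℝ) + 1 / (b : ℝ) - 1 / η) ≥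
      1 / η - 1 / ((n : ℝ) - 1) := by
  have hn' : (3:ℝ) ≤ (n:ℝ) := by exact_mod_cast hn
  have hbn : (b:ℝ) + 2 ≤ (n:ℝ) := by exact_mod_cast (show b + 2 ≤ n by omega)
  have habs : (a:ℝ) + (b:ℝ) + 2 - (n:ℝ) ≤ 1 ∨
      ((a:ℝ) + (b:ℝ) ≥ (n:ℝ) ∧ 1 < (a:ℝ) + (b:ℝ) + 2 - (n:ℝ)) := by
    rcases le_or_gt ((a:ℝ) + (b:ℝ) + 2 - (n:ℝ)) 1 with h | h
    · exact Or.inl h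
    · refine Or.inr ⟨?_, h⟩
      have h1 : (n:ℝ) < (a:ℝ) + (b:ℝ) + 1 := by linarith
      have h2 : n < a + b + 1 := by exact_mod_cast h1
      exact_mod_cast (show n ≤ a + b by omega)
  obtain ⟨N, hN⟩ : ∃ N : ℝ, N = (n:ℝ) - 1 := ⟨_, rfl⟩
  have hNn : (n:ℝ) - 1 = N := hN.symm
  have hn1 : (n:ℝ) = N + 1 := by rw [hN]; ring
  rw [hNn] at hη ha'
  rw [hNn, hn1]
  rw [hn1] at habs hbn
  have hN2 : (2:ℝ) ≤ N := by linarith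
  have haR : (1:ℝ) ≤ (a:ℝ) := by exact_mod_cast ha
  have hbR : (1:ℝ) ≤ (b:ℝ) := by exact_mod_cast hb
  have hbN : (b:ℝ) ≤ N - 1 := by linarith
  have h2a : 2 * (a:ℝ) ≤ N := by linarith
  have hprod : (0:ℝ) < (a:ℝ) * (N - (a:ℝ)) := by nlinarith
  have hηsq : η ^ 2 = (a:ℝ) * (N - (a:ℝ)) := by
    rw [hη]; exact Real.sq_sqrt (le_of_lt hprod)
  have hηpos : 0 < η := by
    rw [hη]; exact Real.sqrt_pos.mpr hprod
  have hηN : 2 * η ≤ N := by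
    nlinarith [sq_nonneg (2 * η - N), sq_nonneg (N - 2 * (a:ℝ))]
  have haP : (0:ℝ) < (a:ℝ) := by linarith
  have hbP : (0:ℝ) < (b:ℝ) := by linarith
  have hNP : (0:ℝ) < N := by linarith
  rw [ge_iff_le, ← sub_nonneg]
  rcases habs with h | ⟨hab, h⟩
  · rw [max_eq_left h]
    have habN : (a:ℝ) + (b:ℝ) ≤ N := by linarith
    have key : η / N * 1 * (1 / (a:ℝ) + 1 / (b:ℝ) - 1 / η) - (1 / η - 1 / N)
        = (η ^ 2 * ((a:ℝ) + (b:ℝ)) - N * (a:ℝ) * (b:ℝ)) / (N * η * (a:ℝ) * (b:ℝ)) := by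
      field_simp; ring
    rw [key]
    apply div_nonneg _ (by positivity)
    rw [hηsq]
    nlinarith [mul_nonneg (mul_pos haP haP).le (by linarith : (0:ℝ) ≤ N - (a:ℝ) - (b:ℝ))]
  · rw [max_eq_right (le_of_lt h)]
    have hs1 : (1:ℝ) ≤ (a:ℝ) + (b:ℝ) - N := by linarith
    have key : η / N * ((a:ℝ) + (b:ℝ) + 2 - (N + 1)) * (1 / (a:ℝ) + 1 / (b:ℝ) - 1 / η)
          - (1 / η - 1 / N)
        = (((a:ℝ) + (b:ℝ) + 1 - N) * (η ^ 2 * ((a:ℝ) + (b:ℝ)) - η * (a:ℝ) * (b:ℝ))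
            - (a:ℝ) * (b:ℝ) * (N - η)) / (N * η * (a:ℝ) * (b:ℝ)) := by
      field_simp; ring
    rw [key]
    apply div_nonneg _ (by positivity)
    rw [hηsq]
    -- s = a+b-N ≥ 1, c = N-a; numerator = heta/2 + h1/2 + h2 exactly
    have hsa : (a:ℝ) + (b:ℝ) - N ≤ (a:ℝ) - 1 := by linarith
    have heta : (0:ℝ) ≤ (N - 2 * η) * ((a:ℝ) * (b:ℝ) * ((a:ℝ) + (b:ℝ) - N)) := by
      apply mul_nonneg (by linarith)
      apply mul_nonneg (by positivity) (by linarith)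
    have h1 : (0:ℝ) ≤ ((a:ℝ) * ((a:ℝ) + (b:ℝ) - N)) * (N * (2*N - 2*(a:ℝ) - (b:ℝ))) := by
      apply mul_nonneg (mul_nonneg haP.le (by linarith))
      apply mul_nonneg hNP.le (by linarith)
    have h2 : (0:ℝ) ≤ ((a:ℝ) * ((a:ℝ) + (b:ℝ) - N)) *
        ((N - (a:ℝ)) * ((a:ℝ) + (b:ℝ) - N + 1) - N) := by
      apply mul_nonneg (mul_nonneg haP.le (by linarith))
      nlinarith [mul_nonneg (by linarith : (0:ℝ) ≤ N - 2*(a:ℝ))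
        (by linarith : (0:ℝ) ≤ (a:ℝ) + (b:ℝ) - N - 1)]
    linarith [heta, h1, h2]
end

section
/- Let G be a simple graph on n vertices with no isolated vertices. If G is disconnected, then the largest eigenvalue λ_n of the normalized graph Laplacian of G satisfies λ_n ≥ n/(n−2), and in particular λ_n > (n+1)/(n−1). -/
/-!
Conjugating by `D^{1/2}` turns the normalized Laplacian into the symmetric matrix
`I - D^{-1/2} A D^{-1/2}`, which has trace `n` and the same eigenvalues. Each connected component
`C` contributes the kernel vector `√d · 𝟙_C`, so a disconnected graph has a kernel of dimension at
least two and hence at most `n - 2` nonzero eigenvalues. Since these sum to the trace `n` and are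
all at most `λ_n`, we get `n ≤ (n - 2) λ_n`.
-/

open Finset

open Matrix Module

namespace Matrix.IsHermitian

variable {𝕜 n : Type*} [RCLike 𝕜] [Fintype n] [DecidableEq n] {A : Matrix n n 𝕜}

theorem re_trace_le_rank_mul (hA : A.IsHermitian) {c : ℝ} (hc : ∀ i, hA.eigenvalues i ≤ c) :
    RCLike.re A.trace ≤ A.rank * c := by
  have htrace : RCLike.re A.trace = ∑ i with hA.eigenvalues i ≠ 0, hA.eigenvalues i := by
    rw [hA.trace_eq_sum_eigenvalues, Finset.sum_filter_ne_zero, map_sum]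
    simp only [RCLike.ofReal_re]
  have hrank : A.rank = #{i | hA.eigenvalues i ≠ 0} := by
    rw [hA.rank_eq_card_non_zero_eigs, Fintype.card_subtype]
  rw [htrace, hrank, ← nsmul_eq_mul, ← Finset.sum_const]
  exact Finset.sum_le_sum fun i _ => hc i

end Matrix.IsHermitian

namespace SimpleGraph

variable {V : Type*} [Fintype V] [DecidableEq V] (G : SimpleGraph V) [DecidableRel G.Adj]

noncomputable def symNormLapMatrix : Matrix V V ℝ :=
  1 - of fun x y => if G.Adj x y then (√(G.degree x) * √(G.degree y))⁻¹ else 0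

theorem isHermitian_symNormLapMatrix : G.symNormLapMatrix.IsHermitian := by
  refine Matrix.IsHermitian.sub isHermitian_one ?_
  ext x y
  simp only [conjTranspose_apply, of_apply, star_trivial, G.adj_comm y x, mul_comm]

variable {G}

theorem trace_symNormLapMatrix : G.symNormLapMatrix.trace = Fintype.card V := by
  simp [symNormLapMatrix, Matrix.trace]

theorem symNormLapMatrix_mulVec_apply (g : V → ℝ) (x : V) :
    (G.symNormLapMatrix *ᵥ g) x =
      g x - ∑ y ∈ G.neighborFinset x, g y / (√(G.degree x) * √(G.degree y)) := by
  rw [symNormLapMatrix, sub_mulVec, one_mulVec, Pi.sub_apply, mulVec, dotProduct,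
    neighborFinset_eq_filter, Finset.sum_filter]
  congr 1
  refine Finset.sum_congr rfl fun y _ => ?_
  split_ifs with hxy <;> simp [hxy, div_eq_inv_mul]

theorem symNormLapMatrix_mulVec_indicator_sqrt_degree {s : Set V}
    (hs : ∀ ⦃x y⦄, G.Adj x y → x ∈ s → y ∈ s) :
    G.symNormLapMatrix *ᵥ s.indicator (fun x => √(G.degree x)) = 0 := by
  funext x
  rw [Pi.zero_apply, symNormLapMatrix_mulVec_apply, sub_eq_zero]
  by_cases hx : x ∈ s
  · have hterm : ∀ y ∈ G.neighborFinset x,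
        s.indicator (fun x => √(G.degree x)) y / (√(G.degree x) * √(G.degree y)) =
          (√(G.degree x))⁻¹ := by
      intro y hy
      rw [mem_neighborFinset] at hy
      have hy_pos : 0 < √(G.degree y : ℝ) :=
        Real.sqrt_pos.2 (Nat.cast_pos.2 hy.symm.degree_pos_left)
      rw [Set.indicator_of_mem (hs hy hx)]
      field_simp
    rw [Finset.sum_congr rfl hterm, Finset.sum_const, card_neighborFinset_eq_degree,
      nsmul_eq_mul, ← div_eq_mul_inv, Real.div_sqrt, Set.indicator_of_mem hx]
  · have hterm : ∀ y ∈ G.neighborFinset x,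
        s.indicator (fun x => √(G.degree x)) y / (√(G.degree x) * √(G.degree y)) = 0 := by
      intro y hy
      rw [mem_neighborFinset] at hy
      rw [Set.indicator_of_notMem fun hy' => hx (hs hy.symm hy'), zero_div]
    rw [Finset.sum_congr rfl hterm, Finset.sum_const_zero, Set.indicator_of_notMem hx]

variable (hdeg : ∀ v : V, 1 ≤ G.degree v)
include hdeg

theorem isNormLapEigenvalue_of_symNormLapMatrix_mulVec {μ : ℝ} {g : V → ℝ} (hg : g ≠ 0)
    (h : G.symNormLapMatrix *ᵥ g = μ • g) : IsNormLapEigenvalue G μ := by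
  have hsqrt (x : V) : 0 < √(G.degree x : ℝ) := Real.sqrt_pos.2 (by exact_mod_cast hdeg x)
  refine ⟨fun x => g x / √(G.degree x), fun h0 => hg (funext fun x => ?_), funext fun x => ?_⟩
  · simpa [(hsqrt x).ne'] using congrFun h0 x
  · have hx := congrFun h x
    simp only [symNormLapMatrix_mulVec_apply, Pi.smul_apply, smul_eq_mul] at hx
    have hsum : (∑ y ∈ G.neighborFinset x, g y / √(G.degree y)) / G.degree x =
        (∑ y ∈ G.neighborFinset x, g y / (√(G.degree x) * √(G.degree y))) / √(G.degree x) := by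
      rw [Finset.sum_div, Finset.sum_div]
      refine Finset.sum_congr rfl fun y _ => ?_
      conv_lhs => rw [← Real.mul_self_sqrt (Nat.cast_nonneg (G.degree x))]
      ring
    simp only [normLap, Pi.smul_apply, smul_eq_mul]
    rw [hsum, ← sub_div, hx, mul_div_assoc]

theorem isNormLapEigenvalue_eigenvalues_symNormLapMatrix (i : V) :
    IsNormLapEigenvalue G ((isHermitian_symNormLapMatrix G).eigenvalues i) :=
  isNormLapEigenvalue_of_symNormLapMatrix_mulVec hdeg
    (by simpa using (isHermitian_symNormLapMatrix G).eigenvectorBasis.orthonormal.ne_zero i)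
    ((isHermitian_symNormLapMatrix G).mulVec_eigenvectorBasis i)

theorem two_le_finrank_ker_symNormLapMatrix (hdisc : ¬ G.Preconnected) :
    2 ≤ finrank ℝ (LinearMap.ker G.symNormLapMatrix.mulVecLin) := by
  obtain ⟨u, v, huv⟩ : ∃ u v, ¬ G.Reachable u v := by simpa [Preconnected] using hdisc
  have hsqrt (x : V) : √(G.degree x : ℝ) ≠ 0 :=
    (Real.sqrt_pos.2 (by exact_mod_cast hdeg x)).ne'
  set component : Set V := {x | G.Reachable u x}
  set b : Fin 2 → V → ℝ :=
    ![Set.univ.indicator fun x => √(G.degree x), component.indicator fun x => √(G.degree x)]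
  have hb : LinearIndependent ℝ b := by
    refine LinearIndependent.pair_iff.2 fun c₁ c₂ hc => ?_
    have hv := congrFun hc v
    have hu := congrFun hc u
    simp only [Pi.add_apply, Pi.smul_apply, Pi.zero_apply, smul_eq_mul,
      Set.indicator_of_mem (Set.mem_univ _), Set.indicator_of_notMem (show v ∉ component from huv),
      Set.indicator_of_mem (show u ∈ component from Reachable.refl u)] at hu hv
    have hc₁ : c₁ = 0 := by simpa [hsqrt v] using hv
    subst hc₁
    simpa [hsqrt u] using hu
  have hb_ker : Submodule.span ℝ (Set.range b) ≤ LinearMap.ker G.symNormLapMatrix.mulVecLin := by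
    refine Submodule.span_le.2 (Set.range_subset_iff.2 (Fin.forall_fin_two.2 ⟨?_, ?_⟩)) <;>
      refine symNormLapMatrix_mulVec_indicator_sqrt_degree ?_
    · exact fun _ _ _ _ => Set.mem_univ _
    · exact fun _ _ hxy hx => hx.trans hxy.reachable
  simpa [finrank_span_eq_card hb] using Submodule.finrank_mono hb_ker

theorem rank_symNormLapMatrix_add_two_le_card (hdisc : ¬ G.Preconnected) :
    G.symNormLapMatrix.rank + 2 ≤ Fintype.card V := by
  have hker := two_le_finrank_ker_symNormLapMatrix hdeg hdisc
  have hsum := LinearMap.finrank_range_add_finrank_ker G.symNormLapMatrix.mulVecLin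
  rw [finrank_fintype_fun_eq_card] at hsum
  rw [Matrix.rank]
  omega

end SimpleGraph

open SimpleGraph in
/-- A disconnected graph on `n` vertices with no isolated vertices has
largest normalized Laplacian eigenvalue at least `n/(n-2)`, which is strictly greater
than `(n+1)/(n-1)`. -/
theorem maxEigenvalue_of_disconnected {V : Type*} [Fintype V] [DecidableEq V]
    (G : SimpleGraph V) [DecidableRel G.Adj] (n : ℕ) (hn : n = Fintype.card V)
    (hdeg : ∀ v : V, 1 ≤ G.degree v)
    (hdisc : ¬ G.Preconnected)
    (lam : ℝ) (hlam : IsMaxNormLapEigenvalue G lam) :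
    lam ≥ (n : ℝ) / ((n : ℝ) - 2) ∧ lam > ((n : ℝ) + 1) / ((n : ℝ) - 1) := by
  subst hn
  obtain ⟨u, -⟩ : ∃ u v, ¬ G.Reachable u v := by simpa [Preconnected] using hdisc
  have hn_pos : (0 : ℝ) < Fintype.card V := by exact_mod_cast Fintype.card_pos_iff.2 ⟨u⟩
  have hrank : (G.symNormLapMatrix.rank : ℝ) + 2 ≤ Fintype.card V := by
    exact_mod_cast rank_symNormLapMatrix_add_two_le_card hdeg hdisc
  have htrace : (Fintype.card V : ℝ) ≤ G.symNormLapMatrix.rank * lam := by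
    simpa [trace_symNormLapMatrix] using (isHermitian_symNormLapMatrix G).re_trace_le_rank_mul
      fun i => hlam.2 _ (isNormLapEigenvalue_eigenvalues_symNormLapMatrix hdeg i)
  have hrank_nonneg : (0 : ℝ) ≤ G.symNormLapMatrix.rank := Nat.cast_nonneg _
  have hlam_pos : 0 < lam := by nlinarith
  have hbound : (Fintype.card V : ℝ) / (Fintype.card V - 2) ≤ lam := by
    rw [div_le_iff₀ (by nlinarith)]
    nlinarith
  refine ⟨hbound, lt_of_lt_of_le ?_ hbound⟩
  rw [div_lt_div_iff₀ (by nlinarith) (by nlinarith)]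
  nlinarith
end

section
/- Let G be a connected non-complete simple graph on n vertices, let v be a vertex with d(v) ≤ n−2, let w be a vertex at distance exactly 2 from v, set A = |N(v) ∩ N(w)|, and define f : V → ℝ by f(x) = −1 if x ∈ N(v) ∩ N(w), f(v) = ((n−1)/2)·A/d(v), f(w) = ((n−1)/2)·A/d(w), and f(x) = 0 otherwise. Then Lf(v) = ((n+1)/(n−1)) f(v), Lf(w) = ((n+1)/(n−1)) f(w), and −Lf(x) ≥ (n+1)/(n−1) for every x ∈ N(v) ∩ N(w); consequently f(x)·Lf(x) ≥ ((n+1)/(n−1)) f(x)² for every vertex x. -/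
open Finset

private lemma testFun_key (N A Dv Dw : ℝ) (hA : 1 ≤ A) (hADv : A ≤ Dv) (hADw : A ≤ Dw)
    (hDvN : Dv ≤ N - 2) (hsum : Dv + Dw ≤ N - 2 + A) :
    A + 1 ≤ (N - 1) / 2 * A / Dv + (N - 1) / 2 * A / Dw := by
  have hDv0 : 0 < Dv := by linarith
  have hDw0 : 0 < Dw := by linarith
  rw [div_add_div _ _ (ne_of_gt hDv0) (ne_of_gt hDw0), le_div_iff₀ (by positivity)]
  nlinarith [mul_nonneg (mul_nonneg (sub_nonneg.2 hA) (by linarith : (0:ℝ) ≤ N - 2 - A))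
      (by linarith : (0:ℝ) ≤ Dv + Dw),
    mul_nonneg (by linarith : (0:ℝ) ≤ A + 1) (sq_nonneg (Dv - Dw)),
    mul_nonneg (mul_nonneg (by linarith : (0:ℝ) ≤ A + 1) (by linarith : (0:ℝ) ≤ Dv + Dw))
      (by linarith : (0:ℝ) ≤ N - 2 + A - (Dv + Dw))]

/-- The test function used in the proof of the lower bound
`λ_n ≥ (n+1)/(n-1)`: it satisfies the eigenvalue equation at `v` and `w`, satisfies
`-Lf(x) ≥ (n+1)/(n-1)` on `N(v) ∩ N(w)`, and pointwise `f·Lf ≥ ((n+1)/(n-1))·f²`. -/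
theorem testFunction_estimates {V : Type*} [Fintype V] [DecidableEq V]
    (G : SimpleGraph V) [DecidableRel G.Adj] (n : ℕ) (hn : n = Fintype.card V)
    (hconn : G.Connected) (hnc : ∃ a b : V, a ≠ b ∧ ¬ G.Adj a b)
    (v w : V) (hdv : G.degree v ≤ n - 2)
    (hvw : v ≠ w) (hnadj : ¬ G.Adj v w)
    (hcommon : ∃ x : V, G.Adj v x ∧ G.Adj x w)
    (A : ℕ) (hA : A = (G.neighborFinset v ∩ G.neighborFinset w).card)
    (f : V → ℝ)
    (hf : f = fun x =>
      if x = v then ((n : ℝ) - 1) / 2 * (A : ℝ) / (G.degree v : ℝ)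
      else if x = w then ((n : ℝ) - 1) / 2 * (A : ℝ) / (G.degree w : ℝ)
      else if x ∈ G.neighborFinset v ∩ G.neighborFinset w then -1 else 0) :
    normLap G f v = (((n : ℝ) + 1) / ((n : ℝ) - 1)) * f v ∧
    normLap G f w = (((n : ℝ) + 1) / ((n : ℝ) - 1)) * f w ∧
    (∀ x ∈ G.neighborFinset v ∩ G.neighborFinset w,
      -(normLap G f x) ≥ ((n : ℝ) + 1) / ((n : ℝ) - 1)) ∧
    (∀ x : V, f x * normLap G f x ≥ (((n : ℝ) + 1) / ((n : ℝ) - 1)) * (f x) ^ 2) := by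
  classical
  set S : Finset V := G.neighborFinset v ∩ G.neighborFinset w with hS
  obtain ⟨x₀, hvx₀, hx₀w⟩ := hcommon
  have hx₀S : x₀ ∈ S := by
    simp [hS, SimpleGraph.mem_neighborFinset, hvx₀, hx₀w.symm]
  have hdv1 : 1 ≤ G.degree v := by
    rw [← SimpleGraph.card_neighborFinset_eq_degree]
    exact Finset.card_pos.2 ⟨x₀, by simp [SimpleGraph.mem_neighborFinset, hvx₀]⟩
  have hn3 : 3 ≤ n := by omega
  have hA1 : 1 ≤ A := by rw [hA]; exact Finset.card_pos.2 ⟨x₀, hx₀S⟩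
  have hwv : ¬ G.Adj w v := fun h => hnadj h.symm
  have hcard : ((univ : Finset V) \ {v, w}).card = n - 2 := by
    rw [Finset.card_sdiff_of_subset (subset_univ _), Finset.card_univ, ← hn]
    congr 1
    rw [Finset.card_insert_of_notMem (by simp [hvw]), Finset.card_singleton]
  have hNv_sub : G.neighborFinset v ⊆ univ \ {v, w} := by
    intro u hu
    rw [SimpleGraph.mem_neighborFinset] at hu
    simp only [Finset.mem_sdiff, Finset.mem_univ, true_and, Finset.mem_insert,
      Finset.mem_singleton]
    push_neg
    exact ⟨fun h => G.irrefl (h ▸ hu), fun h => hnadj (h ▸ hu)⟩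
  have hNw_sub : G.neighborFinset w ⊆ univ \ {v, w} := by
    intro u hu
    rw [SimpleGraph.mem_neighborFinset] at hu
    simp only [Finset.mem_sdiff, Finset.mem_univ, true_and, Finset.mem_insert,
      Finset.mem_singleton]
    push_neg
    exact ⟨fun h => hwv (h ▸ hu), fun h => G.irrefl (h ▸ hu)⟩
  have hdw : G.degree w ≤ n - 2 := by
    rw [← SimpleGraph.card_neighborFinset_eq_degree, ← hcard]
    exact Finset.card_le_card hNw_sub
  have hdw1 : 1 ≤ G.degree w := by
    rw [← SimpleGraph.card_neighborFinset_eq_degree]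
    exact Finset.card_pos.2 ⟨x₀, by simp [SimpleGraph.mem_neighborFinset, hx₀w.symm]⟩
  have hunion_nat : G.degree v + G.degree w ≤ (n - 2) + A := by
    have h1 : (G.neighborFinset v ∪ G.neighborFinset w).card ≤ n - 2 := by
      rw [← hcard]
      exact Finset.card_le_card (Finset.union_subset hNv_sub hNw_sub)
    have h2 := Finset.card_union_add_card_inter (G.neighborFinset v) (G.neighborFinset w)
    rw [SimpleGraph.card_neighborFinset_eq_degree, SimpleGraph.card_neighborFinset_eq_degree,
      ← hS, ← hA] at h2
    omega
  have hADv : A ≤ G.degree v := by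
    rw [hA, ← SimpleGraph.card_neighborFinset_eq_degree]
    exact Finset.card_le_card Finset.inter_subset_left
  have hADw : A ≤ G.degree w := by
    rw [hA, ← SimpleGraph.card_neighborFinset_eq_degree]
    exact Finset.card_le_card Finset.inter_subset_right
  -- real casts
  have hn3R : (3:ℝ) ≤ (n:ℝ) := by exact_mod_cast hn3
  have hn1 : ((n:ℝ) - 1) ≠ 0 := by linarith
  have hDv0 : (0:ℝ) < (G.degree v : ℝ) := by exact_mod_cast hdv1
  have hDw0 : (0:ℝ) < (G.degree w : ℝ) := by exact_mod_cast hdw1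
  have hDvN : ((G.degree v : ℝ)) ≤ (n:ℝ) - 2 := by
    have := hdv
    have h2n : 2 ≤ n := by omega
    calc ((G.degree v : ℝ)) ≤ ((n - 2 : ℕ) : ℝ) := by exact_mod_cast hdv
      _ = (n:ℝ) - 2 := by push_cast [Nat.cast_sub h2n]; ring
  have hDwN : ((G.degree w : ℝ)) ≤ (n:ℝ) - 2 := by
    have h2n : 2 ≤ n := by omega
    calc ((G.degree w : ℝ)) ≤ ((n - 2 : ℕ) : ℝ) := by exact_mod_cast hdw
      _ = (n:ℝ) - 2 := by push_cast [Nat.cast_sub h2n]; ring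
  have hsumR : (G.degree v : ℝ) + (G.degree w : ℝ) ≤ (n:ℝ) - 2 + A := by
    have h2n : 2 ≤ n := by omega
    calc (G.degree v : ℝ) + (G.degree w : ℝ) = ((G.degree v + G.degree w : ℕ) : ℝ) := by
          push_cast; ring
      _ ≤ (((n - 2) + A : ℕ) : ℝ) := by exact_mod_cast hunion_nat
      _ = (n:ℝ) - 2 + A := by push_cast [Nat.cast_sub h2n]; ring
  have hA1R : (1:ℝ) ≤ (A:ℝ) := by exact_mod_cast hA1
  have hADvR : (A:ℝ) ≤ (G.degree v : ℝ) := by exact_mod_cast hADv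
  have hADwR : (A:ℝ) ≤ (G.degree w : ℝ) := by exact_mod_cast hADw
  -- values of f
  have hfv : f v = ((n:ℝ) - 1) / 2 * (A:ℝ) / (G.degree v : ℝ) := by simp [hf]
  have hfw : f w = ((n:ℝ) - 1) / 2 * (A:ℝ) / (G.degree w : ℝ) := by
    simp [hf, hvw.symm]
  have hfother : ∀ y, y ≠ v → y ≠ w → f y = if y ∈ S then (-1:ℝ) else 0 := by
    intro y h1 h2; simp [hf, h1, h2, hS]
  -- neighbor sums at v and w
  have hsumv : ∑ y ∈ G.neighborFinset v, f y = -(A:ℝ) := by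
    have hc : ∑ y ∈ G.neighborFinset v, f y
        = ∑ y ∈ G.neighborFinset v, (if y ∈ S then (-1:ℝ) else 0) :=
      Finset.sum_congr rfl (fun y hy => by
        rw [SimpleGraph.mem_neighborFinset] at hy
        exact hfother y hy.ne' (fun h => hnadj (h ▸ hy)))
    have hsub : S ⊆ G.neighborFinset v := hS ▸ Finset.inter_subset_left
    rw [hc, Finset.sum_ite_mem, Finset.inter_eq_right.2 hsub, Finset.sum_const, hA]
    simp
  have hsumw : ∑ y ∈ G.neighborFinset w, f y = -(A:ℝ) := by
    have hc : ∑ y ∈ G.neighborFinset w, f y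
        = ∑ y ∈ G.neighborFinset w, (if y ∈ S then (-1:ℝ) else 0) :=
      Finset.sum_congr rfl (fun y hy => by
        rw [SimpleGraph.mem_neighborFinset] at hy
        exact hfother y (fun h => hwv (h ▸ hy)) hy.ne')
    have hsub : S ⊆ G.neighborFinset w := hS ▸ Finset.inter_subset_right
    rw [hc, Finset.sum_ite_mem, Finset.inter_eq_right.2 hsub, Finset.sum_const, hA]
    simp
  -- parts 1 and 2
  have part1 : normLap G f v = (((n : ℝ) + 1) / ((n : ℝ) - 1)) * f v := by
    simp only [normLap]
    rw [hsumv, hfv]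
    field_simp
    ring
  have part2 : normLap G f w = (((n : ℝ) + 1) / ((n : ℝ) - 1)) * f w := by
    simp only [normLap]
    rw [hsumw, hfw]
    field_simp
    ring
  -- part 3
  have part3 : ∀ x ∈ S, -(normLap G f x) ≥ ((n : ℝ) + 1) / ((n : ℝ) - 1) := by
    intro x hx
    obtain ⟨hx1, hx2⟩ := Finset.mem_inter.1 (hS ▸ hx)
    rw [SimpleGraph.mem_neighborFinset] at hx1 hx2
    have hxv : x ≠ v := hx1.ne'
    have hxw : x ≠ w := hx2.ne'
    have hfx : f x = -1 := by rw [hfother x hxv hxw]; simp [hx]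
    have hvmem : v ∈ G.neighborFinset x := by
      rw [SimpleGraph.mem_neighborFinset]; exact hx1.symm
    have hwmem : w ∈ (G.neighborFinset x).erase v :=
      Finset.mem_erase.2 ⟨hvw.symm, by rw [SimpleGraph.mem_neighborFinset]; exact hx2.symm⟩
    have hxdeg1 : 1 ≤ G.degree x := by
      rw [← SimpleGraph.card_neighborFinset_eq_degree]
      exact Finset.card_pos.2 ⟨v, hvmem⟩
    have hDx0 : (0:ℝ) < (G.degree x : ℝ) := by exact_mod_cast hxdeg1
    have hDxn : ((G.degree x : ℝ)) ≤ (n:ℝ) - 1 := by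
      have h := G.degree_lt_card_verts x
      rw [← hn] at h
      have : (G.degree x : ℝ) < (n:ℝ) := by exact_mod_cast h
      have h1 : G.degree x + 1 ≤ n := h
      have := (Nat.cast_le (α := ℝ)).2 h1
      push_cast at this
      linarith
    -- split the sum
    have e1 : ∑ y ∈ G.neighborFinset x, f y
        = f v + ∑ y ∈ (G.neighborFinset x).erase v, f y :=
      (Finset.add_sum_erase _ f hvmem).symm
    have e2 : ∑ y ∈ (G.neighborFinset x).erase v, f y
        = f w + ∑ y ∈ ((G.neighborFinset x).erase v).erase w, f y :=
      (Finset.add_sum_erase _ f hwmem).symm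
    set t := ((G.neighborFinset x).erase v).erase w with ht
    have htail : -((A:ℝ) - 1) ≤ ∑ y ∈ t, f y := by
      have hstep : ∀ y ∈ t, (if y ∈ S.erase x then (-1:ℝ) else 0) ≤ f y := by
        intro y hy
        rw [ht, Finset.mem_erase, Finset.mem_erase] at hy
        obtain ⟨hyw, hyv, hyN⟩ := hy
        rw [SimpleGraph.mem_neighborFinset] at hyN
        have hyx : y ≠ x := hyN.ne'
        rw [hfother y hyv hyw]
        by_cases hyS : y ∈ S
        · simp [hyS, hyx]
        · simp [hyS]
      have h1 : ∑ y ∈ t, (if y ∈ S.erase x then (-1:ℝ) else 0)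
          = -(((t ∩ S.erase x).card : ℕ) : ℝ) := by
        rw [Finset.sum_ite_mem, Finset.sum_const]
        simp
      have h2 : (t ∩ S.erase x).card ≤ A - 1 := by
        have := Finset.card_le_card (Finset.inter_subset_right : t ∩ S.erase x ⊆ S.erase x)
        rw [Finset.card_erase_of_mem hx, ← hA] at this
        exact this
      have h3 : (((t ∩ S.erase x).card : ℕ) : ℝ) ≤ (A:ℝ) - 1 := by
        calc (((t ∩ S.erase x).card : ℕ) : ℝ) ≤ ((A - 1 : ℕ) : ℝ) := by exact_mod_cast h2
          _ = (A:ℝ) - 1 := by push_cast [Nat.cast_sub hA1]; ring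
      calc -((A:ℝ) - 1) ≤ ∑ y ∈ t, (if y ∈ S.erase x then (-1:ℝ) else 0) := by
            rw [h1]; linarith
        _ ≤ ∑ y ∈ t, f y := Finset.sum_le_sum hstep
    have hkey : (A:ℝ) + 1 ≤ f v + f w := by
      rw [hfv, hfw]
      exact testFun_key (n:ℝ) (A:ℝ) _ _ hA1R hADvR hADwR hDvN hsumR
    have hS2 : (2:ℝ) ≤ ∑ y ∈ G.neighborFinset x, f y := by
      rw [e1, e2]; linarith
    have hdiv : (2:ℝ) / ((n:ℝ) - 1) ≤ (∑ y ∈ G.neighborFinset x, f y) / (G.degree x : ℝ) :=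
      div_le_div₀ (by linarith) hS2 hDx0 hDxn
    have hmu : ((n:ℝ) + 1) / ((n:ℝ) - 1) = 1 + 2 / ((n:ℝ) - 1) := by
      field_simp
      ring
    simp only [normLap]
    rw [hfx]
    rw [ge_iff_le, hmu]
    linarith
  refine ⟨part1, part2, part3, ?_⟩
  intro x
  by_cases hxv : x = v
  · subst hxv
    rw [part1]
    exact ge_of_eq (by ring)
  by_cases hxw : x = w
  · subst hxw
    rw [part2]
    exact ge_of_eq (by ring)
  by_cases hxS : x ∈ S
  · have hfx : f x = -1 := by rw [hfother x hxv hxw]; simp [hxS]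
    have h := part3 x hxS
    rw [hfx]
    nlinarith [h]
  · have hfx : f x = 0 := by rw [hfother x hxv hxw]; simp [hxS]
    rw [hfx]
    simp
end

section
/- Let n be odd and let G be the graph on n vertices whose complement is the complete bipartite graph with parts P and Q, both of size (n−1)/2, and let φ = 1_P − 1_Q. Then every function f : V → ℝ satisfying ⟨f, φ⟩ = 0 and ⟨f, 1⟩ = 0 (orthogonality with respect to the degree-weighted inner product) satisfies Lf = ((n+1)/(n−1)) f. -/
open Finset

/-- If the complement of `G` is the complete bipartite graph with parts
`P, Q` of size `(n-1)/2` and `φ = 1_P - 1_Q`, then every function orthogonal (in the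
degree-weighted inner product) to `φ` and to the constants is an eigenfunction with
eigenvalue `(n+1)/(n-1)`. -/
theorem orthogonal_eigenfunction_twoCliques {V : Type*} [Fintype V] [DecidableEq V]
    (G : SimpleGraph V) [DecidableRel G.Adj] (n : ℕ) (hn : n = Fintype.card V)
    (hodd : Odd n) (hdeg : ∀ v : V, 1 ≤ G.degree v)
    (P Q : Finset V) (hPQ : Disjoint P Q)
    (hP : 2 * (P.card : ℝ) = (n : ℝ) - 1) (hQ : 2 * (Q.card : ℝ) = (n : ℝ) - 1)
    (hcompl : ∀ x y : V, Gᶜ.Adj x y ↔ ((x ∈ P ∧ y ∈ Q) ∨ (x ∈ Q ∧ y ∈ P)))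
    (φ : V → ℝ) (hφ : φ = fun x => if x ∈ P then 1 else if x ∈ Q then -1 else 0)
    (f : V → ℝ)
    (horth₁ : ∑ x : V, (G.degree x : ℝ) * f x * φ x = 0)
    (horth₂ : ∑ x : V, (G.degree x : ℝ) * f x = 0) :
    normLap G f = (((n : ℝ) + 1) / ((n : ℝ) - 1)) • f := by
  funext x₀
  -- basic numeric facts
  have hn2 : 2 ≤ n := by
    have h1 := hdeg x₀
    have h2 := G.degree_lt_card_verts x₀
    omega
  obtain ⟨k, hk⟩ := hodd
  have hn3 : 3 ≤ n := by omega
  have hn1 : (n : ℝ) - 1 ≠ 0 := by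
    have : (3 : ℝ) ≤ n := by exact_mod_cast hn3
    linarith
  have hPn : 2 * P.card = n - 1 := by
    have h : ((2 * P.card : ℕ) : ℝ) = ((n - 1 : ℕ) : ℝ) := by
      rw [Nat.cast_sub (by omega)]; push_cast; linarith
    exact_mod_cast h
  have hQn : 2 * Q.card = n - 1 := by
    have h : ((2 * Q.card : ℕ) : ℝ) = ((n - 1 : ℕ) : ℝ) := by
      rw [Nat.cast_sub (by omega)]; push_cast; linarith
    exact_mod_cast h
  set R : Finset V := univ \ (P ∪ Q) with hR
  have hcardR : R.card = 1 := by
    rw [hR, card_sdiff_of_subset (subset_univ _), card_univ, card_union_of_disjoint hPQ, ← hn]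
    omega
  -- adjacency description
  have hAdj : ∀ x y : V, G.Adj x y ↔ x ≠ y ∧ ¬((x ∈ P ∧ y ∈ Q) ∨ (x ∈ Q ∧ y ∈ P)) := by
    intro x y
    have h1 := hcompl x y
    rw [SimpleGraph.compl_adj] at h1
    have h2 : G.Adj x y → x ≠ y := G.ne_of_adj
    tauto
  -- neighbor finsets
  have hNP : ∀ x ∈ P, G.neighborFinset x = (univ \ Q).erase x := by
    intro x hx
    have hxQ : x ∉ Q := Finset.disjoint_left.mp hPQ hx
    ext y
    simp only [SimpleGraph.mem_neighborFinset, mem_erase, mem_sdiff, mem_univ, true_and,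
      hAdj, ne_eq]
    constructor
    · rintro ⟨hne, hc⟩
      exact ⟨fun h => hne h.symm, fun hyQ => hc (Or.inl ⟨hx, hyQ⟩)⟩
    · rintro ⟨hyx, hyQ⟩
      refine ⟨fun h => hyx h.symm, ?_⟩
      rintro (⟨_, h⟩ | ⟨h, _⟩)
      · exact hyQ h
      · exact hxQ h
  have hNQ : ∀ x ∈ Q, G.neighborFinset x = (univ \ P).erase x := by
    intro x hx
    have hxP : x ∉ P := Finset.disjoint_right.mp hPQ hx
    ext y
    simp only [SimpleGraph.mem_neighborFinset, mem_erase, mem_sdiff, mem_univ, true_and,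
      hAdj, ne_eq]
    constructor
    · rintro ⟨hne, hc⟩
      exact ⟨fun h => hne h.symm, fun hyP => hc (Or.inr ⟨hx, hyP⟩)⟩
    · rintro ⟨hyx, hyP⟩
      refine ⟨fun h => hyx h.symm, ?_⟩
      rintro (⟨h, _⟩ | ⟨_, h⟩)
      · exact hxP h
      · exact hyP h
  have hNR : ∀ x ∈ R, G.neighborFinset x = univ.erase x := by
    intro x hx
    rw [hR, mem_sdiff, mem_union] at hx
    have hxP : x ∉ P := fun h => hx.2 (Or.inl h)
    have hxQ : x ∉ Q := fun h => hx.2 (Or.inr h)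
    ext y
    simp only [SimpleGraph.mem_neighborFinset, mem_erase, mem_univ, and_true, hAdj, ne_eq]
    constructor
    · rintro ⟨hne, _⟩
      exact fun h => hne h.symm
    · intro hyx
      refine ⟨fun h => hyx h.symm, ?_⟩
      rintro (⟨h, _⟩ | ⟨h, _⟩)
      · exact hxP h
      · exact hxQ h
  -- degrees
  have hdegP : ∀ x ∈ P, (G.degree x : ℝ) = ((n : ℝ) - 1) / 2 := by
    intro x hx
    have hxQ : x ∉ Q := Finset.disjoint_left.mp hPQ hx
    have hd : G.degree x = n - Q.card - 1 := by
      show (G.neighborFinset x).card = _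
      rw [hNP x hx, card_erase_of_mem (by simp [hxQ]), card_sdiff_of_subset (subset_univ Q),
        card_univ, ← hn]
    rw [hd, Nat.cast_sub (by omega), Nat.cast_sub (by omega), Nat.cast_one]
    linarith
  have hdegQ : ∀ x ∈ Q, (G.degree x : ℝ) = ((n : ℝ) - 1) / 2 := by
    intro x hx
    have hxP : x ∉ P := Finset.disjoint_right.mp hPQ hx
    have hd : G.degree x = n - P.card - 1 := by
      show (G.neighborFinset x).card = _
      rw [hNQ x hx, card_erase_of_mem (by simp [hxP]), card_sdiff_of_subset (subset_univ P),
        card_univ, ← hn]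
    rw [hd, Nat.cast_sub (by omega), Nat.cast_sub (by omega), Nat.cast_one]
    linarith
  have hdegR : ∀ x ∈ R, (G.degree x : ℝ) = (n : ℝ) - 1 := by
    intro x hx
    have hd : G.degree x = n - 1 := by
      show (G.neighborFinset x).card = _
      rw [hNR x hx, card_erase_of_mem (mem_univ x), card_univ, ← hn]
    rw [hd, Nat.cast_sub (by omega), Nat.cast_one]
  -- splitting sums
  have hsplit : ∀ g : V → ℝ,
      ∑ x : V, g x = ∑ x ∈ P, g x + ∑ x ∈ Q, g x + ∑ x ∈ R, g x := by
    intro g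
    have h1 : (P ∪ Q) ∪ R = univ := union_sdiff_of_subset (subset_univ _)
    rw [← h1, Finset.sum_union Finset.disjoint_sdiff, Finset.sum_union hPQ]
  set SP := ∑ y ∈ P, f y with hSP
  set SQ := ∑ y ∈ Q, f y with hSQ2
  set SR := ∑ y ∈ R, f y with hSR2
  -- process orthogonality 1
  have h1 : ((n : ℝ) - 1) / 2 * SP - ((n : ℝ) - 1) / 2 * SQ = 0 := by
    rw [hsplit (fun x => (G.degree x : ℝ) * f x * φ x)] at horth₁
    have e1 : ∑ x ∈ P, (G.degree x : ℝ) * f x * φ x = ((n : ℝ) - 1) / 2 * SP := by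
      rw [hSP, Finset.mul_sum]
      refine Finset.sum_congr rfl fun x hx => ?_
      rw [hdegP x hx, hφ]
      simp [hx]
    have e2 : ∑ x ∈ Q, (G.degree x : ℝ) * f x * φ x = -(((n : ℝ) - 1) / 2 * SQ) := by
      rw [hSQ2, Finset.mul_sum, ← Finset.sum_neg_distrib]
      refine Finset.sum_congr rfl fun x hx => ?_
      have hxP : x ∉ P := Finset.disjoint_right.mp hPQ hx
      rw [hdegQ x hx, hφ]
      simp [hx, hxP]
    have e3 : ∑ x ∈ R, (G.degree x : ℝ) * f x * φ x = 0 := by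
      refine Finset.sum_eq_zero fun x hx => ?_
      rw [hR, mem_sdiff, mem_union] at hx
      have hxP : x ∉ P := fun h => hx.2 (Or.inl h)
      have hxQ : x ∉ Q := fun h => hx.2 (Or.inr h)
      rw [hφ]
      simp [hxP, hxQ]
    rw [e1, e2, e3] at horth₁
    linarith
  have hSPQ : SP = SQ := by
    have h2 : ((n : ℝ) - 1) / 2 * (SP - SQ) = 0 := by linarith
    have hne : ((n : ℝ) - 1) / 2 ≠ 0 := by
      intro h; apply hn1; linarith
    have h3 := (mul_eq_zero.mp h2).resolve_left hne
    linarith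
  -- process orthogonality 2
  have h2 : ((n : ℝ) - 1) / 2 * SP + ((n : ℝ) - 1) / 2 * SQ + ((n : ℝ) - 1) * SR = 0 := by
    rw [hsplit (fun x => (G.degree x : ℝ) * f x)] at horth₂
    have e1 : ∑ x ∈ P, (G.degree x : ℝ) * f x = ((n : ℝ) - 1) / 2 * SP := by
      rw [hSP, Finset.mul_sum]
      exact Finset.sum_congr rfl fun x hx => by rw [hdegP x hx]
    have e2 : ∑ x ∈ Q, (G.degree x : ℝ) * f x = ((n : ℝ) - 1) / 2 * SQ := by
      rw [hSQ2, Finset.mul_sum]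
      exact Finset.sum_congr rfl fun x hx => by rw [hdegQ x hx]
    have e3 : ∑ x ∈ R, (G.degree x : ℝ) * f x = ((n : ℝ) - 1) * SR := by
      rw [hSR2, Finset.mul_sum]
      exact Finset.sum_congr rfl fun x hx => by rw [hdegR x hx]
    rw [e1, e2, e3] at horth₂
    linarith
  have hSR : SR = -SP := by
    have h3 : ((n : ℝ) - 1) * (SP + SR) = 0 := by
      rw [← hSPQ] at h2; linarith
    have h4 := (mul_eq_zero.mp h3).resolve_left hn1
    linarith
  have hT : ∑ y : V, f y = SP + SQ + SR := hsplit f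
  -- the goal
  simp only [normLap, Pi.smul_apply, smul_eq_mul]
  by_cases hx₀P : x₀ ∈ P
  · rw [hNP x₀ hx₀P, Finset.sum_erase_eq_sub (by simp [Finset.disjoint_left.mp hPQ hx₀P]),
      Finset.sum_sdiff_eq_sub (subset_univ Q), hdegP x₀ hx₀P, hT, ← hSQ2]
    have hnum : SP + SQ + SR - SQ - f x₀ = -f x₀ := by rw [hSR]; ring
    rw [hnum]
    field_simp
    ring
  by_cases hx₀Q : x₀ ∈ Q
  · rw [hNQ x₀ hx₀Q, Finset.sum_erase_eq_sub (by simp [Finset.disjoint_right.mp hPQ hx₀Q]),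
      Finset.sum_sdiff_eq_sub (subset_univ P), hdegQ x₀ hx₀Q, hT, ← hSP]
    have hnum : SP + SQ + SR - SP - f x₀ = -f x₀ := by rw [hSR, hSPQ]; ring
    rw [hnum]
    field_simp
    ring
  · have hx₀R : x₀ ∈ R := by
      rw [hR, mem_sdiff, mem_union]
      exact ⟨mem_univ _, fun h => h.elim hx₀P hx₀Q⟩
    have hRsing : R = {x₀} := by
      obtain ⟨z, hz⟩ := Finset.card_eq_one.mp hcardR
      rw [hz] at hx₀R ⊢
      rw [Finset.mem_singleton] at hx₀R
      rw [hx₀R]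
    have hfx₀ : SR = f x₀ := by rw [hSR2, hRsing, Finset.sum_singleton]
    rw [hNR x₀ hx₀R, Finset.sum_erase_eq_sub (mem_univ x₀), hdegR x₀ hx₀R, hT]
    have hnum : SP + SQ + SR - f x₀ = -2 * f x₀ := by
      have h5 : SP = -f x₀ := by rw [← hfx₀]; linarith
      rw [h5, ← hSPQ, h5, hfx₀]; ring
    rw [hnum]
    field_simp
    ring
end

section
/- Let n ≥ 3 and let G be the complete graph on n vertices with the single edge (v,w) removed. Set φ = 1_v − 1_w and ψ = −2 + (n+1)(1_v + 1_w). Then every function f : V → ℝ satisfying ⟨f, φ⟩ = 0, ⟨f, ψ⟩ = 0 and ⟨f, 1⟩ = 0 (orthogonality with respect to the degree-weighted inner product) satisfies Lf = (n/(n−1)) f. -/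
open Finset

/-- In the complete graph on `n ≥ 3` vertices minus the edge `(v,w)`,
with `φ = 1_v - 1_w` and `ψ = -2 + (n+1)(1_v + 1_w)`, every function orthogonal (in the
degree-weighted inner product) to `φ`, `ψ` and the constants is an eigenfunction with
eigenvalue `n/(n-1)`. -/
theorem orthogonal_eigenfunction_completeMinusEdge {V : Type*} [Fintype V] [DecidableEq V]
    (G : SimpleGraph V) [DecidableRel G.Adj] (n : ℕ) (hn : n = Fintype.card V)
    (hn3 : 3 ≤ n) (v w : V) (hvw : v ≠ w)
    (hadj : ∀ a b : V, G.Adj a b ↔ (a ≠ b ∧ ¬((a = v ∧ b = w) ∨ (a = w ∧ b = v))))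
    (φ ψ : V → ℝ)
    (hφ : φ = fun x => if x = v then 1 else if x = w then -1 else 0)
    (hψ : ψ = fun x => -2 + ((n : ℝ) + 1) *
      ((if x = v then 1 else 0) + (if x = w then 1 else 0)))
    (f : V → ℝ)
    (horth₁ : ∑ x : V, (G.degree x : ℝ) * f x * φ x = 0)
    (horth₂ : ∑ x : V, (G.degree x : ℝ) * f x * ψ x = 0)
    (horth₃ : ∑ x : V, (G.degree x : ℝ) * f x = 0) :
    normLap G f = ((n : ℝ) / ((n : ℝ) - 1)) • f := by
  have hwv : w ≠ v := hvw.symm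
  -- neighbor finsets
  have hnbr : ∀ x : V, x ≠ v → x ≠ w → G.neighborFinset x = univ.erase x := by
    intro x hxv hxw
    ext y
    rw [SimpleGraph.mem_neighborFinset, hadj]
    simp only [mem_erase, mem_univ, and_true]
    constructor
    · rintro ⟨h1, -⟩; exact fun h => h1 h.symm
    · intro h
      exact ⟨fun h' => h h'.symm,
        fun hh => hh.elim (fun p => hxv p.1) (fun p => hxw p.1)⟩
  have hnv : G.neighborFinset v = (univ.erase v).erase w := by
    ext y
    rw [SimpleGraph.mem_neighborFinset, hadj]
    simp only [mem_erase, mem_univ, and_true]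
    constructor
    · rintro ⟨h1, h2⟩
      exact ⟨fun h => h2 (Or.inl ⟨trivial, h⟩), fun h => h1 h.symm⟩
    · rintro ⟨h1, h2⟩
      exact ⟨fun h => h2 h.symm,
        fun hh => hh.elim (fun p => h1 p.2) (fun p => hvw p.1)⟩
  have hnw : G.neighborFinset w = (univ.erase v).erase w := by
    ext y
    rw [SimpleGraph.mem_neighborFinset, hadj]
    simp only [mem_erase, mem_univ, and_true]
    constructor
    · rintro ⟨h1, h2⟩
      exact ⟨fun h => h1 h.symm, fun h => h2 (Or.inr ⟨trivial, h⟩)⟩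
    · rintro ⟨h1, h2⟩
      exact ⟨fun h => h1 h.symm,
        fun hh => hh.elim (fun p => hvw p.1.symm) (fun p => h2 p.2)⟩
  -- cardinalities
  have hcard : (univ : Finset V).card = n := by rw [hn, Finset.card_univ]
  have hcard1 : (univ.erase v).card = n - 1 := by
    rw [Finset.card_erase_of_mem (mem_univ v), hcard]
  have hcard2 : ((univ.erase v).erase w).card = n - 2 := by
    rw [Finset.card_erase_of_mem (by simp [hwv]), hcard1]
    omega
  -- degrees (as reals)
  have hdvw : (G.degree v : ℝ) = (n : ℝ) - 2 ∧ (G.degree w : ℝ) = (n : ℝ) - 2 := by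
    constructor <;>
    · rw [SimpleGraph.degree]
      first
        | rw [hnv, hcard2]
        | rw [hnw, hcard2]
      rw [Nat.cast_sub (by omega : 2 ≤ n)]
      norm_num
  have hdeg : ∀ x : V, x ≠ v → x ≠ w → (G.degree x : ℝ) = (n : ℝ) - 1 := by
    intro x hxv hxw
    rw [SimpleGraph.degree, hnbr x hxv hxw, Finset.card_erase_of_mem (mem_univ x), hcard,
      Nat.cast_sub (by omega : 1 ≤ n)]
    norm_num
  have hn1 : ((n : ℝ) - 1) ≠ 0 := by
    have : (3 : ℝ) ≤ (n : ℝ) := by exact_mod_cast hn3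
    linarith
  have hn2 : ((n : ℝ) - 2) ≠ 0 := by
    have : (3 : ℝ) ≤ (n : ℝ) := by exact_mod_cast hn3
    linarith
  -- evaluate orth₁
  have h1 : (G.degree v : ℝ) * f v - (G.degree w : ℝ) * f w = 0 := by
    have hk : ∑ x : V, (G.degree x : ℝ) * f x * φ x =
        ∑ x : V, ((if x = v then (G.degree x : ℝ) * f x else 0) +
          (if x = w then -((G.degree x : ℝ) * f x) else 0)) := by
      apply Finset.sum_congr rfl
      intro x _
      rw [hφ]
      by_cases h : x = v
      · subst h; simp [hvw]
      · by_cases h' : x = w <;> simp [h, h', hwv]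
    rw [hk, Finset.sum_add_distrib, Finset.sum_ite_eq' univ v, Finset.sum_ite_eq' univ w]
        at horth₁
    simp only [mem_univ, if_true] at horth₁
    linarith
  -- evaluate orth₂
  have h2 : -2 * (∑ x : V, (G.degree x : ℝ) * f x) +
      ((n : ℝ) + 1) * ((G.degree v : ℝ) * f v) +
      ((n : ℝ) + 1) * ((G.degree w : ℝ) * f w) = 0 := by
    have hk : ∑ x : V, (G.degree x : ℝ) * f x * ψ x =
        ∑ x : V, (-2 * ((G.degree x : ℝ) * f x) +
          ((if x = v then ((n:ℝ)+1) * ((G.degree x : ℝ) * f x) else 0) +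
           (if x = w then ((n:ℝ)+1) * ((G.degree x : ℝ) * f x) else 0))) := by
      apply Finset.sum_congr rfl
      intro x _
      rw [hψ]
      by_cases h : x = v
      · subst h; simp [hvw]; ring
      · by_cases h' : x = w
        · subst h'; simp [h, hwv]; ring
        · simp [h, h']; ring
    rw [hk, Finset.sum_add_distrib, Finset.sum_add_distrib, ← Finset.mul_sum,
      Finset.sum_ite_eq' univ v, Finset.sum_ite_eq' univ w] at horth₂
    simp only [mem_univ, if_true] at horth₂
    linarith
  -- deduce f v = 0, f w = 0
  have hnp1 : ((n : ℝ) + 1) ≠ 0 := by positivity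
  have hfvw : f v = f w := by
    rw [hdvw.1, hdvw.2] at h1
    have h : ((n:ℝ) - 2) * (f v - f w) = 0 := by linarith
    rcases mul_eq_zero.mp h with h | h
    · exact absurd h hn2
    · linarith
  have hfv : f v = 0 := by
    rw [hdvw.1, hdvw.2, horth₃] at h2
    have h : ((n:ℝ) + 1) * (((n:ℝ) - 2) * (f v + f w)) = 0 := by linarith
    rcases mul_eq_zero.mp h with h | h
    · exact absurd h hnp1
    · rcases mul_eq_zero.mp h with h | h
      · exact absurd h hn2
      · linarith [hfvw]
  have hfw : f w = 0 := by linarith [hfvw]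
  -- total sum is zero
  have hS : ∑ x : V, f x = 0 := by
    have hpt : ∀ x : V, (G.degree x : ℝ) * f x = ((n:ℝ) - 1) * f x := by
      intro x
      by_cases hx : x = v
      · subst hx; rw [hfv]; ring
      · by_cases hx' : x = w
        · subst hx'; rw [hfw]; ring
        · rw [hdeg x hx hx']
    rw [funext hpt] at horth₃
    rw [← Finset.mul_sum] at horth₃
    rcases mul_eq_zero.mp horth₃ with h | h
    · exact absurd h hn1
    · exact h
  -- conclude
  funext x
  simp only [normLap, Pi.smul_apply, smul_eq_mul]
  by_cases hx : x = v
  · rw [hx, hnv, Finset.sum_erase_eq_sub (show w ∈ univ.erase v by simp [hwv]),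
      Finset.sum_erase_eq_sub (mem_univ v), hS, hfv, hfw]
    norm_num
  · by_cases hx' : x = w
    · rw [hx', hnw, Finset.sum_erase_eq_sub (show w ∈ univ.erase v by simp [hwv]),
        Finset.sum_erase_eq_sub (mem_univ v), hS, hfv, hfw]
      norm_num
    · rw [hnbr x hx hx', Finset.sum_erase_eq_sub (mem_univ x), hS, hdeg x hx hx']
      field_simp
      ring
end

section
/- Let G be a simple graph on n vertices with no isolated vertices whose largest normalized Laplacian eigenvalue equals (n+1)/(n−1), and let v, w be non-adjacent vertices of G having at least one common neighbor. Then d(v) = d(w), every vertex in N(v) ∩ N(w) has degree n−1, any two distinct vertices in N(v) ∩ N(w) are adjacent, |N(v) ∩ N(w)| = max(1, d(v) + d(w) + 2 − n), and d(v) ∈ {(n−1)/2, n−2}. -/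
open Finset

/-!
Since `λ_n` is the maximum of the Rayleigh quotient, `λ_n ≤ L` says that the quadratic form
`(L - 1) ∑ d(x) g(x)² + ∑_{x ~ y} g(x) g(y)` is positive semidefinite; this is seen by conjugating
with `D^{1/2}`, which turns the normalized Laplacian into the symmetric matrix
`I - D^{-1/2} A D^{-1/2}`.
For `L = (n+1)/(n-1)`, evaluate the form on the function equal to `α` at `v`, `β` at `w` and `s` on
`S = N(v) ∩ N(w)`. Writing `t = |S|`, `X = ∑_{u ∈ S} d(u)`, `P = ∑_{u ∈ S} |N(u) ∩ S|` and
`c = 2/(n-1)`, nonnegativity in `(α, β, s)` gives `4t² ≤ c(d(v) + d(w))(cX + P)`. The counting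
bounds `d(v) + d(w) ≤ n - 2 + t`, `X ≤ t(n-1)` and `P ≤ t(t-1)` bound the right-hand side by
`4t² - 2t(t-1)(n-2-t)/(n-1) ≤ 4t²`, so all of them are equalities; with the discriminant now zero,
nonnegativity for `α ≠ β` forces `d(v) = d(w)`.
-/

open Matrix

section TestFunction

variable {V : Type*} [DecidableEq V] (v w : V) (S : Finset V) (α β s : ℝ)

def testFn (x : V) : ℝ :=
  (if x = v then α else 0) + (if x = w then β else 0) + (if x ∈ S then s else 0)

lemma sum_testFn_mul [Fintype V] (h : V → ℝ) :
    ∑ x, testFn v w S α β s x * h x = α * h v + β * h w + s * ∑ u ∈ S, h u := by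
  simp [testFn, add_mul, sum_add_distrib, ite_mul, sum_ite_mem, mul_sum]

lemma sum_testFn (R : Finset V) :
    ∑ y ∈ R, testFn v w S α β s y =
      (if v ∈ R then α else 0) + (if w ∈ R then β else 0) + #(R ∩ S) * s := by
  simp [testFn, sum_add_distrib, sum_ite_mem]

end TestFunction

lemma sq_le_of_forall_form_nonneg {a b C t : ℝ}
    (h : ∀ α β s, 0 ≤ a * α ^ 2 + b * β ^ 2 + C * s ^ 2 + 2 * t * s * (α + β)) :
    4 * t ^ 2 ≤ (a + b) * C := by
  have hd := discrim_le_zero (a := C) (b := 4 * t) (c := a + b) fun s =>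
    (h 1 1 s).trans_eq (by ring)
  rw [discrim] at hd
  linarith

lemma eq_of_forall_form_nonneg {a b C t : ℝ}
    (h : ∀ α β s, 0 ≤ a * α ^ 2 + b * β ^ 2 + C * s ^ 2 + 2 * t * s * (α + β)) (ht : t ≠ 0)
    (heq : 4 * t ^ 2 = (a + b) * C) : a = b := by
  have hd := discrim_le_zero (a := C) (b := 2 * t * (a + b)) (c := a * b ^ 2 + b * a ^ 2)
    fun s => (h b a s).trans_eq (by ring)
  rw [discrim] at hd
  have hsq : t ^ 2 * (a - b) ^ 2 ≤ t ^ 2 * 0 := by nlinarith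
  have := le_of_mul_le_mul_left hsq (by positivity)
  exact sub_eq_zero.mp (pow_eq_zero_iff two_ne_zero |>.mp (le_antisymm this (sq_nonneg _)))

lemma equality_of_forall_form_nonneg {n t a b X P : ℝ} (ht : 1 ≤ t) (hta : t ≤ a) (htb : t ≤ b)
    (hab : a + b ≤ n - 2 + t) (hX : X ≤ t * (n - 1)) (hP : P ≤ t * (t - 1))
    (hform : ∀ α β s, 0 ≤ ((n + 1) / (n - 1) - 1) * (a * α ^ 2 + b * β ^ 2 + X * s ^ 2) +
      2 * t * s * (α + β) + P * s ^ 2) :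
    a = b ∧ X = t * (n - 1) ∧ P = t * (t - 1) ∧ a + b = n - 2 + t ∧ (t = 1 ∨ t = n - 2) := by
  have hn : 0 < n - 1 := by linarith
  set c := (n + 1) / (n - 1) - 1
  have hc : c * (n - 1) = 2 := by simp only [c]; field_simp; ring
  have hc0 : 0 < c := by nlinarith
  have hform' : ∀ α β s, 0 ≤ c * a * α ^ 2 + c * b * β ^ 2 + (c * X + P) * s ^ 2 +
      2 * t * s * (α + β) := fun α β s => (hform α β s).trans_eq (by ring)
  have hD : c * a + c * b ≤ c * (n - 2 + t) := by
    rw [← mul_add]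
    exact mul_le_mul_of_nonneg_left hab hc0.le
  have hcX : c * X ≤ 2 * t := by nlinarith
  have hE : c * X + P ≤ t * (t + 1) := by linarith
  have hdisc := sq_le_of_forall_form_nonneg hform'
  have hD0 : 0 < c * a + c * b := by nlinarith
  have hE0 : 0 < c * X + P := by nlinarith
  have hK : (4 * t ^ 2 - c * (n - 2 + t) * (t * (t + 1))) * (n - 1) =
      2 * t * ((t - 1) * (n - 2 - t)) := by
    linear_combination (-(n - 2 + t) * (t * (t + 1))) * hc
  have hK0 : 0 ≤ (t - 1) * (n - 2 - t) := mul_nonneg (by linarith) (by linarith)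
  have hDE : (c * a + c * b) * (c * X + P) = c * (n - 2 + t) * (t * (t + 1)) :=
    le_antisymm (mul_le_mul hD hE hE0.le (by linarith)) (by nlinarith)
  obtain ⟨hD', hE'⟩ := (mul_eq_mul_iff_eq_and_eq_of_pos hD hE hD0 (by nlinarith)).mp hDE
  have hP' : P = t * (t - 1) := by linarith
  have hXeq : X = t * (n - 1) := mul_left_cancel₀ hc0.ne' (by linear_combination hE' - hP' - t * hc)
  have hfac : (t - 1) * (n - 2 - t) = 0 := by
    have : 2 * t * ((t - 1) * (n - 2 - t)) ≤ 0 := by rw [← hK]; nlinarith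
    nlinarith
  have h4 : 4 * t ^ 2 = (c * a + c * b) * (c * X + P) := by
    rw [hfac, mul_zero, mul_eq_zero] at hK
    rw [hDE, ← sub_eq_zero]
    exact hK.resolve_right hn.ne'
  refine ⟨mul_left_cancel₀ hc0.ne' (eq_of_forall_form_nonneg hform' (by linarith) h4),
    hXeq, hP', mul_left_cancel₀ hc0.ne' (by linear_combination hD'), ?_⟩
  rcases mul_eq_zero.mp hfac with h | h
  · exact Or.inl (by linarith)
  · exact Or.inr (by linarith)

namespace SimpleGraph

variable {V : Type*} [Fintype V] (G : SimpleGraph V) [DecidableRel G.Adj]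

lemma degree_le_card_sub_one (u : V) : (G.degree u : ℝ) ≤ Fintype.card V - 1 := by
  have := G.degree_lt_card_verts u
  rw [le_sub_iff_add_le]
  exact_mod_cast this

lemma sum_degree_le (S : Finset V) : ∑ u ∈ S, (G.degree u : ℝ) ≤ #S * (Fintype.card V - 1) := by
  simpa using sum_le_card_nsmul S _ _ fun u _ => G.degree_le_card_sub_one u

lemma degree_eq_of_sum_degree_eq {S : Finset V}
    (h : ∑ u ∈ S, (G.degree u : ℝ) = #S * (Fintype.card V - 1)) {u : V} (hu : u ∈ S) :
    G.degree u = Fintype.card V - 1 := by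
  have hu' := (sum_eq_sum_iff_of_le fun u _ => G.degree_le_card_sub_one u).mp
    (by rw [h, sum_const, nsmul_eq_mul]) u hu
  rw [eq_sub_iff_add_eq] at hu'
  have : G.degree u + 1 = Fintype.card V := by exact_mod_cast hu'
  omega

variable [DecidableEq V]

lemma inter_neighborFinset_subset_erase (u : V) (S : Finset V) :
    G.neighborFinset u ∩ S ⊆ S.erase u := fun y hy => by
  simp only [mem_inter, mem_neighborFinset] at hy
  exact mem_erase.mpr ⟨hy.1.ne', hy.2⟩

lemma card_inter_neighborFinset_le {S : Finset V} {u : V} (hu : u ∈ S) :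
    (#(G.neighborFinset u ∩ S) : ℝ) ≤ #S - 1 := by
  have h := card_le_card (G.inter_neighborFinset_subset_erase u S)
  rw [le_sub_iff_add_le, ← card_erase_add_one hu]
  exact_mod_cast Nat.add_le_add_right h 1

lemma sum_card_inter_neighborFinset_le (S : Finset V) :
    ∑ u ∈ S, (#(G.neighborFinset u ∩ S) : ℝ) ≤ #S * (#S - 1) := by
  simpa using sum_le_card_nsmul S _ _ fun u hu => G.card_inter_neighborFinset_le hu

lemma isClique_of_sum_card_inter_neighborFinset_eq {S : Finset V}
    (h : ∑ u ∈ S, (#(G.neighborFinset u ∩ S) : ℝ) = #S * (#S - 1)) : G.IsClique (S : Set V) := by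
  intro u hu y hy hne
  have hu' := (sum_eq_sum_iff_of_le fun u hu => G.card_inter_neighborFinset_le hu).mp
    (by rw [h, sum_const, nsmul_eq_mul]) u hu
  rw [eq_sub_iff_add_eq, ← card_erase_add_one hu] at hu'
  have hcard : #(G.neighborFinset u ∩ S) + 1 = #(S.erase u) + 1 := by exact_mod_cast hu'
  have heq := eq_of_subset_of_card_le (G.inter_neighborFinset_subset_erase u S) (by omega)
  have hy' : y ∈ G.neighborFinset u ∩ S := heq ▸ mem_erase.mpr ⟨hne.symm, hy⟩
  exact (mem_neighborFinset _ _ _).mp (mem_inter.mp hy').1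

lemma degree_add_degree_le {v w : V} (hvw : v ≠ w) (hnadj : ¬ G.Adj v w) :
    (G.degree v : ℝ) + G.degree w ≤
      Fintype.card V - 2 + #(G.neighborFinset v ∩ G.neighborFinset w) := by
  have hsub : G.neighborFinset v ∪ G.neighborFinset w ⊆ ({v, w} : Finset V)ᶜ := by
    intro y
    simp only [mem_union, mem_neighborFinset, mem_compl, mem_insert, mem_singleton]
    rintro (hy | hy) (rfl | rfl) <;> simp_all [adj_comm]
  have h1 := card_le_card hsub
  have h2 := card_union_add_card_inter (G.neighborFinset v) (G.neighborFinset w)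
  have h3 := card_le_univ ({v, w} : Finset V)
  rw [card_compl, card_pair hvw] at h1
  rw [card_pair hvw] at h3
  rw [card_neighborFinset_eq_degree, card_neighborFinset_eq_degree] at h2
  have : G.degree v + G.degree w + 2 ≤
      Fintype.card V + #(G.neighborFinset v ∩ G.neighborFinset w) := by omega
  have : (G.degree v : ℝ) + G.degree w + 2 ≤
      Fintype.card V + #(G.neighborFinset v ∩ G.neighborFinset w) := by exact_mod_cast this
  linarith

noncomputable def normAdjMatrix : Matrix V V ℝ :=
  diagonal (fun x => (√(G.degree x : ℝ))⁻¹) * G.adjMatrix ℝ *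
    diagonal (fun x => (√(G.degree x : ℝ))⁻¹)

lemma isHermitian_normAdjMatrix : G.normAdjMatrix.IsHermitian := by
  have h := isHermitian_mul_mul_conjTranspose
    (diagonal (fun x => (√(G.degree x : ℝ))⁻¹)) (G.isHermitian_adjMatrix ℝ)
  rwa [diagonal_conjTranspose, star_trivial] at h

lemma normAdjMatrix_mulVec_apply (u : V → ℝ) (x : V) :
    (G.normAdjMatrix *ᵥ u) x =
      (√(G.degree x : ℝ))⁻¹ * ∑ y ∈ G.neighborFinset x, (√(G.degree y : ℝ))⁻¹ * u y := by
  simp only [normAdjMatrix, ← mulVec_mulVec, mulVec_diagonal, adjMatrix_mulVec_apply]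

lemma isNormLapEigenvalue_of_normAdjMatrix_mulVec (hdeg : ∀ x, 0 < G.degree x) {u : V → ℝ}
    (hu : u ≠ 0) {μ : ℝ} (h : G.normAdjMatrix *ᵥ u = μ • u) : IsNormLapEigenvalue G (1 - μ) := by
  have hsqrt : ∀ x, 0 < √(G.degree x : ℝ) := fun x => Real.sqrt_pos.mpr (by exact_mod_cast hdeg x)
  refine ⟨fun x => (√(G.degree x : ℝ))⁻¹ * u x, fun h0 => hu (funext fun x => ?_),
    funext fun x => ?_⟩
  · simpa [(hsqrt x).ne'] using congrFun h0 x
  · have hx := congrFun h x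
    rw [normAdjMatrix_mulVec_apply, Pi.smul_apply, smul_eq_mul] at hx
    have hs := (hsqrt x).ne'
    have hsum : ∑ y ∈ G.neighborFinset x, (√(G.degree y : ℝ))⁻¹ * u y =
        √(G.degree x : ℝ) * (μ * u x) := by
      rw [← hx, mul_inv_cancel_left₀ hs]
    simp only [normLap, Pi.smul_apply, smul_eq_mul]
    have hd : (G.degree x : ℝ) = √(G.degree x : ℝ) * √(G.degree x : ℝ) :=
      (Real.mul_self_sqrt (Nat.cast_nonneg _)).symm
    generalize √(G.degree x : ℝ) = r at hs hsum hd
    rw [hsum, hd]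
    field_simp

lemma posSemidef_normAdjMatrix_add_smul_one (hdeg : ∀ x, 0 < G.degree x) {L : ℝ}
    (hL : ∀ ν, IsNormLapEigenvalue G ν → ν ≤ L) :
    (G.normAdjMatrix + (L - 1) • (1 : Matrix V V ℝ)).PosSemidef := by
  have hH : (G.normAdjMatrix + (L - 1) • (1 : Matrix V V ℝ)).IsHermitian :=
    G.isHermitian_normAdjMatrix.add (isHermitian_one.smul (IsSelfAdjoint.all _))
  rw [hH.posSemidef_iff_eigenvalues_nonneg]
  intro i
  show 0 ≤ hH.eigenvalues i
  have hu : (hH.eigenvectorBasis i : V → ℝ) ≠ 0 := fun h0 =>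
    hH.eigenvectorBasis.orthonormal.ne_zero i ((WithLp.ofLp_eq_zero 2).mp h0)
  have hev := hH.mulVec_eigenvectorBasis i
  generalize (hH.eigenvectorBasis i : V → ℝ) = u at hu hev
  generalize hH.eigenvalues i = μ at hev ⊢
  rw [add_mulVec, smul_mulVec, one_mulVec, ← eq_sub_iff_add_eq, ← sub_smul] at hev
  have := hL _ (G.isNormLapEigenvalue_of_normAdjMatrix_mulVec hdeg hu hev)
  linarith

def degreeForm (g : V → ℝ) : ℝ := ∑ x, G.degree x * g x ^ 2

def adjForm (g : V → ℝ) : ℝ := ∑ x, ∑ y ∈ G.neighborFinset x, g x * g y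

lemma one_sub_mul_degreeForm_le_adjForm (hdeg : ∀ x, 0 < G.degree x) {L : ℝ}
    (hL : ∀ ν, IsNormLapEigenvalue G ν → ν ≤ L) (g : V → ℝ) :
    (1 - L) * G.degreeForm g ≤ G.adjForm g := by
  have hsqrt : ∀ x, 0 < √(G.degree x : ℝ) := fun x => Real.sqrt_pos.mpr (by exact_mod_cast hdeg x)
  have h := (G.posSemidef_normAdjMatrix_add_smul_one hdeg hL).dotProduct_mulVec_nonneg
    (fun x => √(G.degree x : ℝ) * g x)
  have hsq : ∀ x, √(G.degree x : ℝ) * √(G.degree x : ℝ) = G.degree x :=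
    fun x => Real.mul_self_sqrt (Nat.cast_nonneg _)
  simp only [star_trivial, dotProduct, add_mulVec, smul_mulVec, one_mulVec, Pi.add_apply,
    Pi.smul_apply, smul_eq_mul, normAdjMatrix_mulVec_apply,
    inv_mul_cancel_left₀ (hsqrt _).ne'] at h
  have hterm : ∀ x, √(G.degree x : ℝ) * g x * ((√(G.degree x : ℝ))⁻¹ *
      ∑ y ∈ G.neighborFinset x, g y + (L - 1) * (√(G.degree x : ℝ) * g x)) =
      ∑ y ∈ G.neighborFinset x, g x * g y + (L - 1) * (G.degree x * g x ^ 2) := by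
    intro x
    have hs := (hsqrt x).ne'
    have hsqx := hsq x
    rw [← mul_sum]
    generalize √(G.degree x : ℝ) = r at hs hsqx ⊢
    rw [← hsqx]
    field_simp
  rw [sum_congr rfl fun x _ => hterm x, sum_add_distrib, ← mul_sum] at h
  unfold degreeForm adjForm
  linarith

variable {v w : V} {S : Finset V} (α β s : ℝ)

lemma degreeForm_testFn (hvw : v ≠ w) (hv : v ∉ S) (hw : w ∉ S) :
    G.degreeForm (testFn v w S α β s) =
      G.degree v * α ^ 2 + G.degree w * β ^ 2 + (∑ u ∈ S, (G.degree u : ℝ)) * s ^ 2 := by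
  have hS : ∀ u ∈ S, testFn v w S α β s u = s := fun u hu => by
    simp [testFn, hu, ne_of_mem_of_not_mem hu hv, ne_of_mem_of_not_mem hu hw]
  simp only [degreeForm, sq, mul_left_comm (G.degree _ : ℝ) (testFn v w S α β s _)]
  rw [sum_testFn_mul, sum_congr rfl fun u hu => by rw [hS u hu]]
  simp only [testFn, ↓reduceIte, if_neg hvw, if_neg hvw.symm, if_neg hv, if_neg hw, add_zero,
    zero_add]
  rw [← sum_mul]
  ring

lemma adjForm_testFn_commonNeighbors (hnadj : ¬ G.Adj v w) :
    G.adjForm (testFn v w (G.neighborFinset v ∩ G.neighborFinset w) α β s) =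
      2 * #(G.neighborFinset v ∩ G.neighborFinset w) * s * (α + β) +
        (∑ u ∈ G.neighborFinset v ∩ G.neighborFinset w,
          (#(G.neighborFinset u ∩ (G.neighborFinset v ∩ G.neighborFinset w)) : ℝ)) * s ^ 2 := by
  set S := G.neighborFinset v ∩ G.neighborFinset w
  have hS : ∀ u ∈ S, v ∈ G.neighborFinset u ∧ w ∈ G.neighborFinset u := fun u hu => by
    simp_all [S, adj_comm]
  simp only [adjForm, ← mul_sum]
  rw [sum_testFn_mul, sum_testFn, sum_testFn,
    sum_congr rfl fun u hu => by rw [sum_testFn, if_pos (hS u hu).1, if_pos (hS u hu).2]]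
  simp only [mem_neighborFinset, SimpleGraph.irrefl, ↓reduceIte, hnadj, adj_comm, add_zero,
    zero_add, inter_eq_right.mpr inter_subset_left, inter_eq_right.mpr inter_subset_right, S]
  rw [sum_add_distrib, sum_const, nsmul_eq_mul, ← sum_mul]
  ring

lemma commonNeighbors_form_nonneg (hdeg : ∀ x, 0 < G.degree x) {L : ℝ}
    (hL : ∀ ν, IsNormLapEigenvalue G ν → ν ≤ L) (hvw : v ≠ w) (hnadj : ¬ G.Adj v w) :
    0 ≤ (L - 1) * (G.degree v * α ^ 2 + G.degree w * β ^ 2 +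
        (∑ u ∈ G.neighborFinset v ∩ G.neighborFinset w, (G.degree u : ℝ)) * s ^ 2) +
      2 * #(G.neighborFinset v ∩ G.neighborFinset w) * s * (α + β) +
      (∑ u ∈ G.neighborFinset v ∩ G.neighborFinset w,
          (#(G.neighborFinset u ∩ (G.neighborFinset v ∩ G.neighborFinset w)) : ℝ)) * s ^ 2 := by
  have h := G.one_sub_mul_degreeForm_le_adjForm hdeg hL
    (testFn v w (G.neighborFinset v ∩ G.neighborFinset w) α β s)
  rw [G.degreeForm_testFn α β s hvw (by simp) (by simp [hnadj]),
    G.adjForm_testFn_commonNeighbors α β s hnadj] at h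
  linarith

end SimpleGraph

/-- Equality-case (rigidity) conclusions: if the largest normalized
Laplacian eigenvalue of `G` equals `(n+1)/(n-1)` and `v, w` are non-adjacent vertices with
a common neighbor, then `d(v) = d(w)`, all common neighbors have degree `n-1` and are
pairwise adjacent, `|N(v) ∩ N(w)| = max(1, d(v)+d(w)+2-n)`, and
`d(v) ∈ {(n-1)/2, n-2}`. -/
theorem rigidity_conclusions {V : Type*} [Fintype V] [DecidableEq V]
    (G : SimpleGraph V) [DecidableRel G.Adj] (n : ℕ) (hn : n = Fintype.card V)
    (hdeg : ∀ v : V, 1 ≤ G.degree v)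
    (hmax : IsMaxNormLapEigenvalue G (((n : ℝ) + 1) / ((n : ℝ) - 1)))
    (v w : V) (hvw : v ≠ w) (hnadj : ¬ G.Adj v w)
    (hcommon : ∃ x : V, G.Adj v x ∧ G.Adj x w) :
    G.degree v = G.degree w ∧
    (∀ x ∈ G.neighborFinset v ∩ G.neighborFinset w, G.degree x = n - 1) ∧
    (∀ x ∈ G.neighborFinset v ∩ G.neighborFinset w,
      ∀ y ∈ G.neighborFinset v ∩ G.neighborFinset w, x ≠ y → G.Adj x y) ∧
    (((G.neighborFinset v ∩ G.neighborFinset w).card : ℝ) =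
      max 1 ((G.degree v : ℝ) + (G.degree w : ℝ) + 2 - (n : ℝ))) ∧
    ((G.degree v : ℝ) = ((n : ℝ) - 1) / 2 ∨ G.degree v = n - 2) := by
  subst hn
  obtain ⟨x, hvx, hxw⟩ := hcommon
  set S := G.neighborFinset v ∩ G.neighborFinset w
  have hS : (1 : ℝ) ≤ #S := by
    exact_mod_cast card_pos.mpr ⟨x, by simp [S, hvx, hxw.symm]⟩
  have hSv : (#S : ℝ) ≤ G.degree v := by
    exact_mod_cast G.card_neighborFinset_eq_degree v ▸ card_le_card inter_subset_left
  have hSw : (#S : ℝ) ≤ G.degree w := by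
    exact_mod_cast G.card_neighborFinset_eq_degree w ▸ card_le_card inter_subset_right
  obtain ⟨hdvw, hX, hP, hsum, ht⟩ := equality_of_forall_form_nonneg hS hSv hSw
    (G.degree_add_degree_le hvw hnadj) (G.sum_degree_le S) (G.sum_card_inter_neighborFinset_le S)
    (G.commonNeighbors_form_nonneg · · · hdeg hmax.2 hvw hnadj)
  refine ⟨by exact_mod_cast hdvw, fun u hu => G.degree_eq_of_sum_degree_eq hX hu,
    G.isClique_of_sum_card_inter_neighborFinset_eq hP, ?_, ?_⟩
  · rw [max_eq_right] <;> linarith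
  · rcases ht with ht | ht
    · left
      linarith
    · right
      have : (G.degree v : ℝ) + 2 = Fintype.card V := by linarith
      have : G.degree v + 2 = Fintype.card V := by exact_mod_cast this
      omega
end

section
/- Let n be odd with n > 3 and let G be the graph on n vertices formed by two copies of the complete graph K_{(n+1)/2} sharing exactly one common vertex z; write P and Q for the two sets of (n−1)/2 vertices other than z in the two copies. For any v' ∈ P and w' ∈ Q, the function g equal to 1 at v' and at w', equal to −1 at z, and 0 elsewhere is an eigenfunction of the normalized graph Laplacian of G with eigenvalue (n+1)/(n−1). In particular, the eigenvalue (n+1)/(n−1) of G has multiplicity greater than 1. -/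
open Finset

lemma twoCliques_eigen_aux {V : Type*} [Fintype V] [DecidableEq V]
    (G : SimpleGraph V) [DecidableRel G.Adj] (n : ℕ) (hn : n = Fintype.card V)
    (hn3 : 3 < n)
    (z : V) (P Q : Finset V) (hzP : z ∉ P) (hzQ : z ∉ Q) (hPQ : Disjoint P Q)
    (hP : 2 * (P.card : ℝ) = (n : ℝ) - 1) (hQ : 2 * (Q.card : ℝ) = (n : ℝ) - 1)
    (hcover : ∀ x : V, x = z ∨ x ∈ P ∨ x ∈ Q)
    (hadj : ∀ x y : V, G.Adj x y ↔ (x ≠ y ∧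
      ((x ∈ insert z P ∧ y ∈ insert z P) ∨ (x ∈ insert z Q ∧ y ∈ insert z Q))))
    (v' w' : V) (hv' : v' ∈ P) (hw' : w' ∈ Q) :
    normLap G (fun x => if x = v' ∨ x = w' then (1:ℝ) else if x = z then -1 else 0)
      = (((n : ℝ) + 1) / ((n : ℝ) - 1)) •
        (fun x => if x = v' ∨ x = w' then (1:ℝ) else if x = z then -1 else 0) := by
  set g : V → ℝ := fun x => if x = v' ∨ x = w' then (1:ℝ) else if x = z then -1 else 0 with hg
  have hvz : v' ≠ z := fun h => hzP (h ▸ hv')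
  have hwz : w' ≠ z := fun h => hzQ (h ▸ hw')
  have hvw : v' ≠ w' := fun h => (Finset.disjoint_left.mp hPQ) hv' (h ▸ hw')
  have h3 : (3:ℝ) < n := by exact_mod_cast hn3
  have hn1 : (n : ℝ) - 1 ≠ 0 := by linarith
  have hPcard : (P.card : ℝ) ≠ 0 := by intro h; rw [h] at hP; linarith
  have hQcard : (Q.card : ℝ) ≠ 0 := by intro h; rw [h] at hQ; linarith
  -- neighbor finsets
  have hNz : G.neighborFinset z = Finset.univ.erase z := by
    ext y
    simp only [SimpleGraph.mem_neighborFinset, hadj, Finset.mem_erase, Finset.mem_univ,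
      and_true, Finset.mem_insert]
    constructor
    · rintro ⟨h, _⟩; exact fun hy => h hy.symm
    · intro hy
      rcases hcover y with rfl | hy' | hy' <;> tauto
  have hNP : ∀ p ∈ P, G.neighborFinset p = insert z (P.erase p) := by
    intro p hp
    have hpz : p ≠ z := fun h => hzP (h ▸ hp)
    have hpQ : p ∉ Q := Finset.disjoint_left.mp hPQ hp
    ext y
    simp only [SimpleGraph.mem_neighborFinset, hadj, Finset.mem_insert, Finset.mem_erase]
    constructor
    · rintro ⟨hne, h | h⟩
      · rcases h.2 with rfl | hy
        · exact Or.inl rfl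
        · exact Or.inr ⟨fun h' => hne h'.symm, hy⟩
      · rcases h.1 with rfl | hp'
        · exact absurd rfl hpz
        · exact absurd hp' hpQ
    · rintro (rfl | ⟨hyp, hy⟩)
      · exact ⟨hpz, Or.inl ⟨Or.inr hp, Or.inl rfl⟩⟩
      · exact ⟨fun h => hyp h.symm, Or.inl ⟨Or.inr hp, Or.inr hy⟩⟩
  have hNQ : ∀ p ∈ Q, G.neighborFinset p = insert z (Q.erase p) := by
    intro p hp
    have hpz : p ≠ z := fun h => hzQ (h ▸ hp)
    have hpP : p ∉ P := Finset.disjoint_right.mp hPQ hp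
    ext y
    simp only [SimpleGraph.mem_neighborFinset, hadj, Finset.mem_insert, Finset.mem_erase]
    constructor
    · rintro ⟨hne, h | h⟩
      · rcases h.1 with rfl | hp'
        · exact absurd rfl hpz
        · exact absurd hp' hpP
      · rcases h.2 with rfl | hy
        · exact Or.inl rfl
        · exact Or.inr ⟨fun h' => hne h'.symm, hy⟩
    · rintro (rfl | ⟨hyp, hy⟩)
      · exact ⟨hpz, Or.inr ⟨Or.inr hp, Or.inl rfl⟩⟩
      · exact ⟨fun h => hyp h.symm, Or.inr ⟨Or.inr hp, Or.inr hy⟩⟩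
  -- degrees
  have hdz : (G.degree z : ℝ) = (n : ℝ) - 1 := by
    rw [SimpleGraph.degree, hNz, Finset.card_erase_of_mem (Finset.mem_univ z),
      Finset.card_univ, ← hn]
    have h1 : 1 ≤ n := by omega
    push_cast [Nat.cast_sub h1]
    ring
  have hdP : ∀ p ∈ P, (G.degree p : ℝ) = (P.card : ℝ) := by
    intro p hp
    rw [SimpleGraph.degree, hNP p hp,
      Finset.card_insert_of_notMem (fun h => hzP (Finset.mem_of_mem_erase h)),
      Finset.card_erase_of_mem hp]
    have h1 : 1 ≤ P.card := Finset.card_pos.mpr ⟨p, hp⟩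
    push_cast [Nat.cast_sub h1]
    ring
  have hdQ : ∀ p ∈ Q, (G.degree p : ℝ) = (Q.card : ℝ) := by
    intro p hp
    rw [SimpleGraph.degree, hNQ p hp,
      Finset.card_insert_of_notMem (fun h => hzQ (Finset.mem_of_mem_erase h)),
      Finset.card_erase_of_mem hp]
    have h1 : 1 ≤ Q.card := Finset.card_pos.mpr ⟨p, hp⟩
    push_cast [Nat.cast_sub h1]
    ring
  funext x
  simp only [normLap, Pi.smul_apply, smul_eq_mul]
  rcases hcover x with hxz | hx | hx
  · -- x = z
    have hsum : (∑ y ∈ G.neighborFinset x, g y) = 2 := by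
      rw [hxz, hNz]
      have key : ∀ y ∈ Finset.univ.erase z, g y =
          (if y = v' then (1:ℝ) else 0) + (if y = w' then 1 else 0) := by
        intro y hy
        have hyz : y ≠ z := (Finset.mem_erase.mp hy).1
        simp only [hg]
        by_cases h1 : y = v' <;> by_cases h2 : y = w' <;>
          simp_all [hvw]
      rw [Finset.sum_congr rfl key, Finset.sum_add_distrib,
        Finset.sum_ite_eq' _ v' (fun _ => (1:ℝ)), Finset.sum_ite_eq' _ w' (fun _ => (1:ℝ))]
      simp [hvz, hwz]
      norm_num
    have hgx : g x = -1 := by rw [hxz]; simp [hg, Ne.symm hvz, Ne.symm hwz]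
    rw [hsum, hxz, hdz]
    have hgz : g z = -1 := by rw [← hxz]; exact hgx
    rw [hgz]
    field_simp
    ring
  · -- x ∈ P
    have hxz : x ≠ z := fun h => hzP (h ▸ hx)
    have hxw : x ≠ w' := fun h => (Finset.disjoint_left.mp hPQ) hx (h ▸ hw')
    have hsum : (∑ y ∈ G.neighborFinset x, g y) =
        -1 + (if v' ∈ P.erase x then 1 else 0) := by
      rw [hNP x hx, Finset.sum_insert (fun h => hzP (Finset.mem_of_mem_erase h))]
      have hgz : g z = -1 := by simp [hg, hvz.symm, hwz.symm]
      have key : ∀ y ∈ P.erase x, g y = if y = v' then (1:ℝ) else 0 := by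
        intro y hy
        have hyP := Finset.mem_of_mem_erase hy
        have hyw : y ≠ w' := fun h => (Finset.disjoint_left.mp hPQ) hyP (h ▸ hw')
        have hyz : y ≠ z := fun h => hzP (h ▸ hyP)
        simp only [hg]
        by_cases h1 : y = v' <;> simp_all
      rw [Finset.sum_congr rfl key, Finset.sum_ite_eq' _ v' (fun _ => (1:ℝ)), hgz]
    rw [hsum, hdP x hx]
    by_cases hxv : x = v'
    · have hnm : v' ∉ P.erase x := by
        rw [hxv]; exact fun h => (Finset.mem_erase.mp h).1 rfl
      rw [if_neg hnm]
      have hgx : g x = 1 := by simp [hg, hxv]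
      rw [hgx]
      have h2 : (P.card : ℝ) = ((n:ℝ) - 1) / 2 := by linarith
      rw [h2]
      field_simp
      ring
    · have hm : v' ∈ P.erase x := Finset.mem_erase.mpr ⟨fun h => hxv h.symm, hv'⟩
      rw [if_pos hm]
      have hgx : g x = 0 := by simp [hg, hxv, hxw, hxz]
      rw [hgx]
      simp
  · -- x ∈ Q
    have hxz : x ≠ z := fun h => hzQ (h ▸ hx)
    have hxv : x ≠ v' := fun h => (Finset.disjoint_right.mp hPQ) hx (h ▸ hv')
    have hsum : (∑ y ∈ G.neighborFinset x, g y) =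
        -1 + (if w' ∈ Q.erase x then 1 else 0) := by
      rw [hNQ x hx, Finset.sum_insert (fun h => hzQ (Finset.mem_of_mem_erase h))]
      have hgz : g z = -1 := by simp [hg, hvz.symm, hwz.symm]
      have key : ∀ y ∈ Q.erase x, g y = if y = w' then (1:ℝ) else 0 := by
        intro y hy
        have hyQ := Finset.mem_of_mem_erase hy
        have hyv : y ≠ v' := fun h => (Finset.disjoint_right.mp hPQ) hyQ (h ▸ hv')
        have hyz : y ≠ z := fun h => hzQ (h ▸ hyQ)
        simp only [hg]
        by_cases h1 : y = w' <;> simp_all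
      rw [Finset.sum_congr rfl key, Finset.sum_ite_eq' _ w' (fun _ => (1:ℝ)), hgz]
    rw [hsum, hdQ x hx]
    by_cases hxw : x = w'
    · have hnm : w' ∉ Q.erase x := by
        rw [hxw]; exact fun h => (Finset.mem_erase.mp h).1 rfl
      rw [if_neg hnm]
      have hgx : g x = 1 := by simp [hg, hxw]
      rw [hgx]
      have h2 : (Q.card : ℝ) = ((n:ℝ) - 1) / 2 := by linarith
      rw [h2]
      field_simp
      ring
    · have hm : w' ∈ Q.erase x := Finset.mem_erase.mpr ⟨fun h => hxw h.symm, hw'⟩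
      rw [if_pos hm]
      have hgx : g x = 0 := by simp [hg, hxv, hxw, hxz]
      rw [hgx]
      simp

/-- For odd `n > 3`, in the graph made of two copies of `K_{(n+1)/2}`
(on vertex sets `P ∪ {z}` and `Q ∪ {z}`) sharing exactly the vertex `z`, for any
`v' ∈ P`, `w' ∈ Q`, the function equal to `1` at `v'` and `w'`, `-1` at `z` and `0`
elsewhere is an eigenfunction with eigenvalue `(n+1)/(n-1)`; in particular this
eigenvalue has multiplicity greater than one. -/
theorem eigenvalue_multiplicity_twoCliques {V : Type*} [Fintype V] [DecidableEq V]
    (G : SimpleGraph V) [DecidableRel G.Adj] (n : ℕ) (hn : n = Fintype.card V)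
    (hodd : Odd n) (hn3 : 3 < n)
    (z : V) (P Q : Finset V) (hzP : z ∉ P) (hzQ : z ∉ Q) (hPQ : Disjoint P Q)
    (hP : 2 * (P.card : ℝ) = (n : ℝ) - 1) (hQ : 2 * (Q.card : ℝ) = (n : ℝ) - 1)
    (hcover : ∀ x : V, x = z ∨ x ∈ P ∨ x ∈ Q)
    (hadj : ∀ x y : V, G.Adj x y ↔ (x ≠ y ∧
      ((x ∈ insert z P ∧ y ∈ insert z P) ∨ (x ∈ insert z Q ∧ y ∈ insert z Q))))
    (v' w' : V) (hv' : v' ∈ P) (hw' : w' ∈ Q)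
    (g : V → ℝ)
    (hg : g = fun x => if x = v' ∨ x = w' then 1 else if x = z then -1 else 0) :
    (normLap G g = (((n : ℝ) + 1) / ((n : ℝ) - 1)) • g ∧ g ≠ 0) ∧
    (∃ f₁ f₂ : V → ℝ, f₁ ≠ 0 ∧ f₂ ≠ 0 ∧
      normLap G f₁ = (((n : ℝ) + 1) / ((n : ℝ) - 1)) • f₁ ∧
      normLap G f₂ = (((n : ℝ) + 1) / ((n : ℝ) - 1)) • f₂ ∧
      LinearIndependent ℝ ![f₁, f₂]) := by

  subst hg
  have key := twoCliques_eigen_aux G n hn hn3 z P Q hzP hzQ hPQ hP hQ hcover hadj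
  have hvz : v' ≠ z := fun h => hzP (h ▸ hv')
  have hwz : w' ≠ z := fun h => hzQ (h ▸ hw')
  have hvw : v' ≠ w' := fun h => (Finset.disjoint_left.mp hPQ) hv' (h ▸ hw')
  have hg1 := key v' w' hv' hw'
  have hPcard : 1 < P.card := by
    have h3 : (3:ℝ) < n := by exact_mod_cast hn3
    have : (1:ℝ) < P.card := by linarith
    exact_mod_cast this
  obtain ⟨v'', hv''P, hv''ne⟩ := Finset.exists_mem_ne hPcard v'
  have hg2 := key v'' w' hv''P hw'
  have hv''z : v'' ≠ z := fun h => hzP (h ▸ hv''P)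
  have hv''w : v'' ≠ w' := fun h => (Finset.disjoint_left.mp hPQ) hv''P (h ▸ hw')
  set f₁ : V → ℝ := fun x => if x = v' ∨ x = w' then (1:ℝ) else if x = z then -1 else 0
  set f₂ : V → ℝ := fun x => if x = v'' ∨ x = w' then (1:ℝ) else if x = z then -1 else 0
  have hf₁ne : f₁ ≠ 0 := by
    intro h
    have := congrFun h v'
    simp [f₁] at this
  have hf₂ne : f₂ ≠ 0 := by
    intro h
    have := congrFun h v''
    simp [f₂] at this
  have hf₂v' : f₂ v' = 0 := by simp [f₂, hvz, hv''ne.symm, hvw]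
  have hf₁v' : f₁ v' = 1 := by simp [f₁]
  refine ⟨⟨hg1, hf₁ne⟩, f₁, f₂, hf₁ne, hf₂ne, hg1, hg2, ?_⟩
  rw [linearIndependent_fin2]
  refine ⟨hf₂ne, fun a h => ?_⟩
  have := congrFun h v'
  simp only [Matrix.cons_val_one, Matrix.head_cons, Matrix.cons_val_zero] at this
  rw [Pi.smul_apply, hf₂v', hf₁v'] at this
  simp at this
end
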